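/- arXiv:2507.01517 — 11 statements merged into one kernel-verified Lean document; each statement's English description precedes it below -/
import Mathlib

section
/- Decomposition of a conditional mean under treatment aggregation: under unconfoundedness, E[Y | T ∈ 𝒯_a, X ∈ 𝒳_g] = Σ_{t∈𝒯_a} e_{ta}(𝒳_g) μ_t(𝒳_g) + Σ_{t∈𝒯_a} Cov(e_t(X), μ_t(X) | X ∈ 𝒳_g) / P(T ∈ 𝒯_a | X ∈ 𝒳_g), i.e. the conditional mean equals the synthetic group-stratified-experiment term plus an individualized-targeting covariance term. -/
open MeasureTheory

/-- Expectation of `Z` conditional on the event `A`: `E[Z | A]`. -/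
noncomputable def cexp {Ω : Type*} [MeasurableSpace Ω] (P : Measure Ω) (A : Set Ω)
    (Z : Ω → ℝ) : ℝ :=
  (∫ ω in A, Z ω ∂P) / (P A).toReal

/-- Covariance of `Z` and `W` conditional on the event `A`: `Cov(Z, W | A)`. -/
noncomputable def ccov {Ω : Type*} [MeasurableSpace Ω] (P : Measure Ω) (A : Set Ω)
    (Z W : Ω → ℝ) : ℝ :=
  cexp P A (fun ω => Z ω * W ω) - cexp P A Z * cexp P A W

/-- `e_{ta}(x) = P(T = t | X = x, T ∈ 𝒯_a)`, expressed via the effective propensities: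
`e_{ta}(x) = e_t(x) / Σ_{s∈𝒯_a} e_s(x)`. -/
noncomputable def eCondAgg {𝕋 𝒳 : Type*} (e : 𝕋 → 𝒳 → ℝ) (Ta : Finset 𝕋)
    (t : 𝕋) (x : 𝒳) : ℝ :=
  e t x / ∑ s ∈ Ta, e s x

/-- **Decomposition of a conditional mean under treatment aggregation.** Under
unconfoundedness,
`E[Y | T ∈ 𝒯_a, X ∈ 𝒳_g]
  = Σ_{t∈𝒯_a} e_{ta}(𝒳_g) μ_t(𝒳_g)
    + (Σ_{t∈𝒯_a} Cov(e_t(X), μ_t(X) | X ∈ 𝒳_g)) / P(T ∈ 𝒯_a | X ∈ 𝒳_g)`,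
i.e. the conditional mean equals the synthetic group-stratified-experiment term plus
an individualized-targeting covariance term. Here `m t` is a version of
`E[Y(t)|X = ·]`, `e t` a positive version of `P(T = t|X = ·)`, and unconfoundedness
is stated in conditional-mean form (`hUC`). -/
theorem statement1
    {Ω 𝕋 𝒳 : Type*} [MeasurableSpace Ω] [Fintype 𝕋] [MeasurableSpace 𝕋]
    [MeasurableSingletonClass 𝕋] [MeasurableSpace 𝒳]
    (P : Measure Ω) [IsProbabilityMeasure P]
    (Y : 𝕋 → Ω → ℝ) (T : Ω → 𝕋) (X : Ω → 𝒳)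
    (hT : Measurable T) (hX : Measurable X)
    (hYmeas : ∀ t, Measurable (Y t))
    (hYint : ∀ t, Integrable (Y t) P)
    (hYsq : ∀ t, Integrable (fun ω => Y t ω ^ 2) P)
    (m : 𝕋 → 𝒳 → ℝ) (hmmeas : ∀ t, Measurable (m t))
    (hmint : ∀ t, Integrable (fun ω => m t (X ω)) P)
    (hm : ∀ t, ∀ B : Set 𝒳, MeasurableSet B →
      ∫ ω in X ⁻¹' B, Y t ω ∂P = ∫ ω in X ⁻¹' B, m t (X ω) ∂P)
    (e : 𝕋 → 𝒳 → ℝ) (hemeas : ∀ t, Measurable (e t))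
    (he : ∀ t, ∀ B : Set 𝒳, MeasurableSet B →
      (P (X ⁻¹' B ∩ T ⁻¹' {t})).toReal = ∫ ω in X ⁻¹' B, e t (X ω) ∂P)
    (hepos : ∀ t x, 0 < e t x)
    (hUC : ∀ t s, ∀ B : Set 𝒳, MeasurableSet B →
      ∫ ω in X ⁻¹' B ∩ T ⁻¹' {s}, Y t ω ∂P
        = ∫ ω in X ⁻¹' B, m t (X ω) * e s (X ω) ∂P)
    (Ta : Finset 𝕋) (Xg : Set 𝒳) (hXg : MeasurableSet Xg)
    (hPTa : 0 < (P (T ⁻¹' (Ta : Set 𝕋))).toReal)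
    (hPXg : 0 < (P (X ⁻¹' Xg)).toReal)
    (hPTaXg : 0 < (P (T ⁻¹' (Ta : Set 𝕋) ∩ X ⁻¹' Xg)).toReal) :
    cexp P (T ⁻¹' (Ta : Set 𝕋) ∩ X ⁻¹' Xg) (fun ω => Y (T ω) ω)
      = (∑ t ∈ Ta,
          cexp P (X ⁻¹' Xg ∩ T ⁻¹' (Ta : Set 𝕋)) (fun ω => eCondAgg e Ta t (X ω))
            * cexp P (X ⁻¹' Xg) (fun ω => m t (X ω)))
        + (∑ t ∈ Ta, ccov P (X ⁻¹' Xg) (fun ω => e t (X ω)) (fun ω => m t (X ω)))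
            / ((P (T ⁻¹' (Ta : Set 𝕋) ∩ X ⁻¹' Xg)).toReal / (P (X ⁻¹' Xg)).toReal) := by
  classical
  have hGm : MeasurableSet (X ⁻¹' Xg) := hX hXg
  -- integrability of e s ∘ X
  have he_int : ∀ s, Integrable (fun ω => e s (X ω)) P := by
    intro s
    have hmeas : Measurable fun ω => e s (X ω) := (hemeas s).comp hX
    have hnn : 0 ≤ᶠ[ae P] fun ω => e s (X ω) := ae_of_all _ fun ω => (hepos s (X ω)).le
    refine ⟨hmeas.aestronglyMeasurable, (hasFiniteIntegral_iff_ofReal hnn).2 ?_⟩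
    have hBm : ∀ n : ℕ, MeasurableSet (e s ⁻¹' Set.Iio (n : ℝ)) :=
      fun n => (hemeas s) measurableSet_Iio
    have hbound : ∀ n : ℕ,
        ∫⁻ ω in X ⁻¹' (e s ⁻¹' Set.Iio (n : ℝ)), ENNReal.ofReal (e s (X ω)) ∂P ≤ 1 := by
      intro n
      have hint : IntegrableOn (fun ω => e s (X ω)) (X ⁻¹' (e s ⁻¹' Set.Iio (n : ℝ))) P := by
        refine Integrable.mono' (integrable_const (n : ℝ)) hmeas.aestronglyMeasurable ?_
        refine (ae_restrict_iff' (hX (hBm n))).2 (ae_of_all _ fun ω hω => ?_)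
        rw [Real.norm_eq_abs, abs_of_nonneg (hepos s (X ω)).le]
        exact le_of_lt hω
      rw [← ofReal_integral_eq_lintegral_ofReal hint
        (ae_of_all _ fun ω => (hepos s (X ω)).le), ← he s _ (hBm n)]
      calc ENNReal.ofReal (P (X ⁻¹' (e s ⁻¹' Set.Iio (n : ℝ)) ∩ T ⁻¹' {s})).toReal
          = P (X ⁻¹' (e s ⁻¹' Set.Iio (n : ℝ)) ∩ T ⁻¹' {s}) :=
            ENNReal.ofReal_toReal (measure_ne_top _ _)
        _ ≤ 1 := prob_le_one
    have hsup : (fun ω => ENNReal.ofReal (e s (X ω))) =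
        fun ω => ⨆ n : ℕ, (X ⁻¹' (e s ⁻¹' Set.Iio (n : ℝ))).indicator
          (fun ω => ENNReal.ofReal (e s (X ω))) ω := by
      funext ω
      refine le_antisymm ?_ (iSup_le fun n => Set.indicator_le_self _ _ ω)
      obtain ⟨n, hn⟩ := exists_nat_gt (e s (X ω))
      refine le_iSup_of_le n ?_
      rw [Set.indicator_of_mem (show ω ∈ X ⁻¹' (e s ⁻¹' Set.Iio (n : ℝ)) from hn)]
    rw [hsup, lintegral_iSup
      (fun n => (hmeas.ennreal_ofReal.indicator (hX (hBm n))))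
      (fun n k hnk => Set.indicator_le_indicator_of_subset
        (fun ω hω => show e s (X ω) < (k:ℝ) from lt_of_lt_of_le hω (by exact_mod_cast hnk))
        (fun ω => zero_le))]
    refine lt_of_le_of_lt (iSup_le fun n => ?_) ENNReal.one_lt_top
    rw [lintegral_indicator (hX (hBm n))]
    exact hbound n
  -- the conditional law of X given T = s
  have hmap : ∀ s, Measure.map X (P.restrict (T ⁻¹' {s}))
      = (Measure.map X P).withDensity (fun x => ENNReal.ofReal (e s x)) := by
    intro s
    ext B hB
    rw [Measure.map_apply hX hB, Measure.restrict_apply (hX hB),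
      withDensity_apply _ hB, setLIntegral_map hB (hemeas s).ennreal_ofReal hX,
      ← ofReal_integral_eq_lintegral_ofReal (he_int s).integrableOn
        (ae_of_all _ fun ω => (hepos s (X ω)).le),
      ← he s B hB, ENNReal.ofReal_toReal (measure_ne_top _ _)]
  -- key transfer lemma
  have L1 : ∀ (s : 𝕋) (g : 𝒳 → ℝ), Measurable g → ∀ B : Set 𝒳, MeasurableSet B →
      ∫ ω in X ⁻¹' B ∩ T ⁻¹' {s}, g (X ω) ∂P = ∫ ω in X ⁻¹' B, g (X ω) * e s (X ω) ∂P := by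
    intro s g hg B hB
    have h1 : ∫ ω in X ⁻¹' B ∩ T ⁻¹' {s}, g (X ω) ∂P
        = ∫ x in B, g x ∂(Measure.map X (P.restrict (T ⁻¹' {s}))) := by
      rw [setIntegral_map hB hg.aestronglyMeasurable hX.aemeasurable,
        Measure.restrict_restrict (hX hB)]
    have h2 : ∫ ω in X ⁻¹' B, g (X ω) * e s (X ω) ∂P
        = ∫ x in B, g x * e s x ∂(Measure.map X P) := by
      rw [setIntegral_map hB (show AEStronglyMeasurable (fun x => g x * e s x) (Measure.map X P) from
        (hg.mul (hemeas s)).aestronglyMeasurable) hX.aemeasurable]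
    rw [h1, h2, hmap s]
    have hd : (fun x => ENNReal.ofReal (e s x)) = fun x => ((e s x).toNNReal : ENNReal) := rfl
    rw [hd, restrict_withDensity hB,
      integral_withDensity_eq_integral_smul (hemeas s).real_toNNReal g]
    refine integral_congr_ae (ae_of_all _ fun x => ?_)
    simp [NNReal.smul_def, Real.coe_toNNReal _ (hepos s x).le, mul_comm]
  -- decomposition of the aggregated event
  have hsetTa : T ⁻¹' (Ta : Set 𝕋) = ⋃ s ∈ Ta, T ⁻¹' {s} := by
    rw [← Set.biUnion_of_singleton (Ta : Set 𝕋)]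
    simp [Set.preimage_iUnion]
  have hsetdecomp : X ⁻¹' Xg ∩ T ⁻¹' (Ta : Set 𝕋) = ⋃ s ∈ Ta, (X ⁻¹' Xg ∩ T ⁻¹' {s}) := by
    rw [hsetTa, Set.inter_iUnion₂]
  have hpiece : ∀ s : 𝕋, MeasurableSet (X ⁻¹' Xg ∩ T ⁻¹' {s}) :=
    fun s => hGm.inter (hT (measurableSet_singleton s))
  have hdisj : (↑Ta : Set 𝕋).Pairwise (Function.onFun Disjoint fun s => X ⁻¹' Xg ∩ T ⁻¹' {s}) := by
    intro s _ s' _ hss'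
    refine Set.disjoint_left.2 fun ω hω hω' => hss' ?_
    have h1 : T ω = s := hω.2
    have h2 : T ω = s' := hω'.2
    rw [← h1, h2]
  have hdecomp : ∀ f : Ω → ℝ, (∀ s ∈ Ta, IntegrableOn f (X ⁻¹' Xg ∩ T ⁻¹' {s}) P) →
      ∫ ω in X ⁻¹' Xg ∩ T ⁻¹' (Ta : Set 𝕋), f ω ∂P
        = ∑ s ∈ Ta, ∫ ω in X ⁻¹' Xg ∩ T ⁻¹' {s}, f ω ∂P := by
    intro f hf
    rw [hsetdecomp]
    exact integral_biUnion_finset Ta (fun s _ => hpiece s) hdisj hf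
  -- nonemptiness and sum positivity
  have hTan : Ta.Nonempty := by
    rcases Ta.eq_empty_or_nonempty with h | h
    · exfalso; rw [h] at hPTa; simp at hPTa
    · exact h
  have hsumpos : ∀ x, 0 < ∑ s ∈ Ta, e s x :=
    fun x => Finset.sum_pos (fun s _ => hepos s x) hTan
  have hec0 : ∀ (t : 𝕋) (x : 𝒳), 0 ≤ eCondAgg e Ta t x :=
    fun t x => div_nonneg (hepos t x).le (Finset.sum_nonneg fun s _ => (hepos s x).le)
  have hec1 : ∀ t ∈ Ta, ∀ x, eCondAgg e Ta t x ≤ 1 := fun t ht x =>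
    (div_le_one (hsumpos x)).2 (Finset.single_le_sum (fun s _ => (hepos s x).le) ht)
  have hecmeas : ∀ t : 𝕋, Measurable (eCondAgg e Ta t) := by
    intro t
    show Measurable fun x => e t x / ∑ s ∈ Ta, e s x
    exact (hemeas t).div (Finset.measurable_sum _ fun s _ => hemeas s)
  -- LHS numerator
  have hintY : ∀ s ∈ Ta, IntegrableOn (fun ω => Y (T ω) ω) (X ⁻¹' Xg ∩ T ⁻¹' {s}) P := by
    intro s _
    refine ((hYint s).integrableOn).congr ?_
    refine (ae_restrict_iff' (hpiece s)).2 (ae_of_all _ fun ω hω => ?_)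
    show Y s ω = Y (T ω) ω
    rw [show T ω = s from hω.2]
  have hLHSnum : ∫ ω in T ⁻¹' (Ta : Set 𝕋) ∩ X ⁻¹' Xg, Y (T ω) ω ∂P
      = ∑ t ∈ Ta, ∫ ω in X ⁻¹' Xg, m t (X ω) * e t (X ω) ∂P := by
    rw [Set.inter_comm, hdecomp _ hintY]
    refine Finset.sum_congr rfl fun t ht => ?_
    rw [setIntegral_congr_ae (hpiece t)
      (ae_of_all _ fun ω hω => (by rw [show T ω = t from hω.2] : Y (T ω) ω = Y t ω)),
      hUC t t Xg hXg]
  -- numerator of the aggregated propensity cexp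
  have hN1 : ∀ t ∈ Ta, ∫ ω in X ⁻¹' Xg ∩ T ⁻¹' (Ta : Set 𝕋), eCondAgg e Ta t (X ω) ∂P
      = ∫ ω in X ⁻¹' Xg, e t (X ω) ∂P := by
    intro t ht
    have hint : ∀ s ∈ Ta, IntegrableOn (fun ω => eCondAgg e Ta t (X ω))
        (X ⁻¹' Xg ∩ T ⁻¹' {s}) P := by
      intro s _
      refine Integrable.mono' (integrable_const (1 : ℝ))
        ((hecmeas t).comp hX).aestronglyMeasurable (ae_of_all _ fun ω => ?_)
      rw [Real.norm_eq_abs, abs_of_nonneg (hec0 t (X ω))]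
      exact hec1 t ht (X ω)
    have hint2 : ∀ s ∈ Ta, Integrable
        (fun ω => eCondAgg e Ta t (X ω) * e s (X ω)) (P.restrict (X ⁻¹' Xg)) := by
      intro s _
      refine Integrable.mono' (he_int s).integrableOn
        (((hecmeas t).comp hX).mul ((hemeas s).comp hX)).aestronglyMeasurable
        (ae_of_all _ fun ω => ?_)
      rw [Real.norm_eq_abs, abs_of_nonneg (mul_nonneg (hec0 t (X ω)) (hepos s (X ω)).le)]
      exact mul_le_of_le_one_left (hepos s (X ω)).le (hec1 t ht (X ω))
    rw [hdecomp _ hint,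
      Finset.sum_congr rfl (fun s _ => L1 s _ (hecmeas t) Xg hXg),
      ← integral_finset_sum Ta hint2]
    refine integral_congr_ae (ae_of_all _ fun ω => ?_)
    show (∑ s ∈ Ta, eCondAgg e Ta t (X ω) * e s (X ω)) = e t (X ω)
    rw [← Finset.mul_sum]
    show e t (X ω) / (∑ s ∈ Ta, e s (X ω)) * (∑ s ∈ Ta, e s (X ω)) = e t (X ω)
    exact div_mul_cancel₀ _ (hsumpos (X ω)).ne'
  have hPcomm : P (X ⁻¹' Xg ∩ T ⁻¹' (Ta : Set 𝕋)) = P (T ⁻¹' (Ta : Set 𝕋) ∩ X ⁻¹' Xg) := by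
    rw [Set.inter_comm]
  have hCm : ∀ t : 𝕋, (∫ ω in X ⁻¹' Xg, e t (X ω) * m t (X ω) ∂P)
      = ∫ ω in X ⁻¹' Xg, m t (X ω) * e t (X ω) ∂P :=
    fun t => integral_congr_ae (ae_of_all _ fun ω => mul_comm _ _)
  -- assemble
  have hL : cexp P (T ⁻¹' (Ta : Set 𝕋) ∩ X ⁻¹' Xg) (fun ω => Y (T ω) ω)
      = (∑ t ∈ Ta, ∫ ω in X ⁻¹' Xg, m t (X ω) * e t (X ω) ∂P)
        / (P (T ⁻¹' (Ta : Set 𝕋) ∩ X ⁻¹' Xg)).toReal := by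
    simp only [cexp]
    rw [hLHSnum]
  have hR1 : (∑ t ∈ Ta,
        cexp P (X ⁻¹' Xg ∩ T ⁻¹' (Ta : Set 𝕋)) (fun ω => eCondAgg e Ta t (X ω))
          * cexp P (X ⁻¹' Xg) (fun ω => m t (X ω)))
      = (∑ t ∈ Ta, (∫ ω in X ⁻¹' Xg, e t (X ω) ∂P) * (∫ ω in X ⁻¹' Xg, m t (X ω) ∂P))
        / ((P (T ⁻¹' (Ta : Set 𝕋) ∩ X ⁻¹' Xg)).toReal * (P (X ⁻¹' Xg)).toReal) := by
    rw [Finset.sum_div]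
    refine Finset.sum_congr rfl fun t ht => ?_
    simp only [cexp]
    rw [hN1 t ht, hPcomm, div_mul_div_comm]
  have hR2 : (∑ t ∈ Ta, ccov P (X ⁻¹' Xg) (fun ω => e t (X ω)) (fun ω => m t (X ω)))
      = (∑ t ∈ Ta, ∫ ω in X ⁻¹' Xg, m t (X ω) * e t (X ω) ∂P) / (P (X ⁻¹' Xg)).toReal
        - (∑ t ∈ Ta, (∫ ω in X ⁻¹' Xg, e t (X ω) ∂P) * (∫ ω in X ⁻¹' Xg, m t (X ω) ∂P))
          / ((P (X ⁻¹' Xg)).toReal * (P (X ⁻¹' Xg)).toReal) := by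
    rw [Finset.sum_div, Finset.sum_div, ← Finset.sum_sub_distrib]
    refine Finset.sum_congr rfl fun t ht => ?_
    simp only [ccov, cexp]
    rw [hCm t, div_mul_div_comm]
  rw [hL, hR1, hR2]
  have ha : (P (T ⁻¹' (Ta : Set 𝕋) ∩ X ⁻¹' Xg)).toReal ≠ 0 := ne_of_gt hPTaXg
  have hb : (P (X ⁻¹' Xg)).toReal ≠ 0 := ne_of_gt hPXg
  generalize (∑ t ∈ Ta, ∫ ω in X ⁻¹' Xg, m t (X ω) * e t (X ω) ∂P) = S1
  generalize (∑ t ∈ Ta, (∫ ω in X ⁻¹' Xg, e t (X ω) ∂P) * (∫ ω in X ⁻¹' Xg, m t (X ω) ∂P)) = S2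
  generalize hA : (P (T ⁻¹' (Ta : Set 𝕋) ∩ X ⁻¹' Xg)).toReal = a at ha
  generalize hB : (P (X ⁻¹' Xg)).toReal = b at hb
  field_simp
  ring
end

section
/- Decomposition of an adjusted conditional mean under treatment aggregation: under unconfoundedness, E[ E[Y | T ∈ 𝒯_a, X] | X ∈ 𝒳_g ] = Σ_{t∈𝒯_a} e_{ta}(𝒳_g) μ_t(𝒳_g) + Σ_{t∈𝒯_a} Cov(e_{ta}(X), μ_t(X) | X ∈ 𝒳_g) + Σ_{t∈𝒯_a} ( E[e_{ta}(X) | X ∈ 𝒳_g] − e_{ta}(𝒳_g) ) μ_t(𝒳_g), i.e. the synthetic group-stratified-experiment term plus a conditional individualized-targeting covariance term plus an aggregate composition adjustment term. -/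
open MeasureTheory

/-- **Decomposition of an adjusted conditional mean under treatment aggregation.**
Under unconfoundedness,
`E[ E[Y | T ∈ 𝒯_a, X] | X ∈ 𝒳_g ]
  = Σ_{t∈𝒯_a} e_{ta}(𝒳_g) μ_t(𝒳_g)
    + Σ_{t∈𝒯_a} Cov(e_{ta}(X), μ_t(X) | X ∈ 𝒳_g)
    + Σ_{t∈𝒯_a} (E[e_{ta}(X) | X ∈ 𝒳_g] − e_{ta}(𝒳_g)) μ_t(𝒳_g)`,
i.e. the synthetic group-stratified-experiment term plus a conditional
individualized-targeting covariance term plus an aggregate composition adjustment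
term. Here `w` is a version of the adjusted regression `E[Y | T ∈ 𝒯_a, X = ·]`
(that is, `x ↦ E[Y·1(T∈𝒯_a)|X=x]/P(T∈𝒯_a|X=x)`, characterized by `hw`), `m t` a
version of `E[Y(t)|X = ·]`, `e t` a positive version of `P(T = t|X = ·)`, and
unconfoundedness is stated in conditional-mean form (`hUC`). -/
theorem statement2
    {Ω 𝕋 𝒳 : Type*} [MeasurableSpace Ω] [Fintype 𝕋] [MeasurableSpace 𝕋]
    [MeasurableSingletonClass 𝕋] [MeasurableSpace 𝒳]
    (P : Measure Ω) [IsProbabilityMeasure P]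
    (Y : 𝕋 → Ω → ℝ) (T : Ω → 𝕋) (X : Ω → 𝒳)
    (hT : Measurable T) (hX : Measurable X)
    (hYmeas : ∀ t, Measurable (Y t))
    (hYint : ∀ t, Integrable (Y t) P)
    (hYsq : ∀ t, Integrable (fun ω => Y t ω ^ 2) P)
    (m : 𝕋 → 𝒳 → ℝ) (hmmeas : ∀ t, Measurable (m t))
    (hmint : ∀ t, Integrable (fun ω => m t (X ω)) P)
    (hm : ∀ t, ∀ B : Set 𝒳, MeasurableSet B →
      ∫ ω in X ⁻¹' B, Y t ω ∂P = ∫ ω in X ⁻¹' B, m t (X ω) ∂P)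
    (e : 𝕋 → 𝒳 → ℝ) (hemeas : ∀ t, Measurable (e t))
    (he : ∀ t, ∀ B : Set 𝒳, MeasurableSet B →
      (P (X ⁻¹' B ∩ T ⁻¹' {t})).toReal = ∫ ω in X ⁻¹' B, e t (X ω) ∂P)
    (hepos : ∀ t x, 0 < e t x)
    (hUC : ∀ t s, ∀ B : Set 𝒳, MeasurableSet B →
      ∫ ω in X ⁻¹' B ∩ T ⁻¹' {s}, Y t ω ∂P
        = ∫ ω in X ⁻¹' B, m t (X ω) * e s (X ω) ∂P)
    (Ta : Finset 𝕋)
    (w : 𝒳 → ℝ) (hwmeas : Measurable w)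
    (hwint : Integrable (fun ω => w (X ω)) P)
    (hw : ∀ B : Set 𝒳, MeasurableSet B →
      ∫ ω in X ⁻¹' B ∩ T ⁻¹' (Ta : Set 𝕋), Y (T ω) ω ∂P
        = ∫ ω in X ⁻¹' B, w (X ω) * ∑ s ∈ Ta, e s (X ω) ∂P)
    (Xg : Set 𝒳) (hXg : MeasurableSet Xg)
    (hPTa : 0 < (P (T ⁻¹' (Ta : Set 𝕋))).toReal)
    (hPXg : 0 < (P (X ⁻¹' Xg)).toReal)
    (hPTaXg : 0 < (P (T ⁻¹' (Ta : Set 𝕋) ∩ X ⁻¹' Xg)).toReal) :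
    cexp P (X ⁻¹' Xg) (fun ω => w (X ω))
      = (∑ t ∈ Ta,
          cexp P (X ⁻¹' Xg ∩ T ⁻¹' (Ta : Set 𝕋)) (fun ω => eCondAgg e Ta t (X ω))
            * cexp P (X ⁻¹' Xg) (fun ω => m t (X ω)))
        + (∑ t ∈ Ta,
            ccov P (X ⁻¹' Xg) (fun ω => eCondAgg e Ta t (X ω)) (fun ω => m t (X ω)))
        + ∑ t ∈ Ta,
            (cexp P (X ⁻¹' Xg) (fun ω => eCondAgg e Ta t (X ω))
              - cexp P (X ⁻¹' Xg ∩ T ⁻¹' (Ta : Set 𝕋)) (fun ω => eCondAgg e Ta t (X ω)))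
              * cexp P (X ⁻¹' Xg) (fun ω => m t (X ω)) := by
  classical
  have hXa : AEMeasurable X P := hX.aemeasurable
  set ν : Measure 𝒳 := P.map X with hνdef
  have hνB : ∀ B : Set 𝒳, MeasurableSet B → ν B = P (X ⁻¹' B) := fun B hB =>
    Measure.map_apply hX hB
  have hνprob : IsProbabilityMeasure ν := Measure.isProbabilityMeasure_map hXa
  -- Ta is nonempty
  have hTane : Ta.Nonempty := by
    rcases Finset.eq_empty_or_nonempty Ta with h | h
    · exfalso
      rw [h] at hPTa
      simp at hPTa
    · exact h
  have hgpos : ∀ x, 0 < ∑ s ∈ Ta, e s x := fun x =>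
    Finset.sum_pos (fun s _ => hepos s x) hTane
  have hgmeas : Measurable (fun x => ∑ s ∈ Ta, e s x) :=
    Finset.measurable_sum _ fun s _ => hemeas s
  -- conversion of set integrals through the pushforward
  have hmap : ∀ (F : 𝒳 → ℝ), Measurable F → ∀ B : Set 𝒳, MeasurableSet B →
      ∫ x in B, F x ∂ν = ∫ ω in X ⁻¹' B, F (X ω) ∂P := fun F hF B hB =>
    setIntegral_map hB hF.aestronglyMeasurable hXa
  have hintmap : ∀ (F : 𝒳 → ℝ), Measurable F → Integrable (fun ω => F (X ω)) P →
      Integrable F ν := by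
    intro F hF h
    rw [hνdef, integrable_map_measure hF.aestronglyMeasurable hXa]
    exact h
  -- a.e. bound: e t ≤ 1 under ν
  have hele1 : ∀ t, ∀ᵐ x ∂ν, e t x ≤ 1 := by
    intro t
    have hnull : ∀ n : ℕ, ν {x | 1 < e t x ∧ e t x < n} = 0 := by
      intro n
      set s : Set 𝒳 := {x | 1 < e t x ∧ e t x < n} with hsdef
      have hsm : MeasurableSet s :=
        (measurableSet_lt measurable_const (hemeas t)).inter
          (measurableSet_lt (hemeas t) measurable_const)
      have hbdd : ∀ᵐ x ∂ν.restrict s, ‖e t x‖ ≤ (n : ℝ) := by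
        refine (ae_restrict_iff' hsm).2 (Filter.Eventually.of_forall ?_)
        intro x hx
        rw [Real.norm_eq_abs, abs_of_pos (hepos t x)]
        exact le_of_lt hx.2
      have hint : IntegrableOn (e t) s ν :=
        Integrable.mono' (integrable_const (n : ℝ)) (hemeas t).aestronglyMeasurable hbdd
      have h1 : ∫ x in s, e t x ∂ν ≤ (ν s).toReal := by
        rw [hmap (e t) (hemeas t) s hsm, ← he t s hsm, hνB s hsm]
        exact ENNReal.toReal_mono (measure_ne_top P _)
          (measure_mono Set.inter_subset_left)
      have hsub1 : IntegrableOn (fun x => e t x - 1) s ν :=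
        hint.sub (integrable_const 1).integrableOn
      have h2 : ∫ x in s, (e t x - 1) ∂ν ≤ 0 := by
        rw [integral_sub hint (integrable_const 1).integrableOn]
        have hc : ∫ _ in s, (1 : ℝ) ∂ν = (ν s).toReal := by
          rw [setIntegral_const, smul_eq_mul, mul_one, measureReal_def]
        rw [hc]
        linarith
      have hnn : 0 ≤ᵐ[ν.restrict s] fun x => e t x - 1 := by
        refine (ae_restrict_iff' hsm).2 (Filter.Eventually.of_forall ?_)
        intro x hx
        have h1x := hx.1
        simp only [Pi.zero_apply]
        linarith
      have h3 : 0 ≤ ∫ x in s, (e t x - 1) ∂ν :=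
        setIntegral_nonneg hsm fun x hx => by
          have h1x := hx.1; simp only [sub_nonneg]; linarith
      have heq0 : ∫ x in s, (e t x - 1) ∂ν = 0 := le_antisymm h2 h3
      have haez : (fun x => e t x - 1) =ᵐ[ν.restrict s] 0 :=
        (setIntegral_eq_zero_iff_of_nonneg_ae hnn hsub1).1 heq0
      have hnullset : ν.restrict s {x | ¬ (e t x - 1 = 0)} = 0 := by
        have := haez
        rw [Filter.EventuallyEq, ae_iff] at this
        simpa using this
      have hss : s ⊆ {x | ¬ (e t x - 1 = 0)} := by
        intro x hx
        have h1x := hx.1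
        simp only [Set.mem_setOf_eq]
        intro habs
        linarith
      refine le_zero_iff.1 ?_
      calc ν s = ν.restrict s s := (Measure.restrict_apply_self _ _).symm
        _ ≤ ν.restrict s {x | ¬ (e t x - 1 = 0)} := measure_mono hss
        _ = 0 := hnullset
    have hcover : {x | 1 < e t x} ⊆ ⋃ n : ℕ, {x | 1 < e t x ∧ e t x < n} := by
      intro x hx
      obtain ⟨n, hn⟩ := exists_nat_gt (e t x)
      exact Set.mem_iUnion.2 ⟨n, hx, hn⟩
    have : ν {x | 1 < e t x} = 0 :=
      measure_mono_null hcover (measure_iUnion_null hnull)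
    rw [ae_iff]
    simpa [not_le] using this
  -- integrability facts under ν
  have hmintν : ∀ t, Integrable (m t) ν := fun t => hintmap _ (hmmeas t) (hmint t)
  have hwintν : Integrable w ν := hintmap _ hwmeas hwint
  have hfintν : ∀ t, Integrable (fun x => m t x * e t x) ν := by
    intro t
    refine Integrable.mono' (hmintν t).abs
      ((hmmeas t).mul (hemeas t)).aestronglyMeasurable ?_
    filter_upwards [hele1 t] with x hx
    rw [Real.norm_eq_abs, abs_mul]
    have h0 : |e t x| ≤ 1 := by rw [abs_of_pos (hepos t x)]; exact hx
    calc |m t x| * |e t x| ≤ |m t x| * 1 :=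
          mul_le_mul_of_nonneg_left h0 (abs_nonneg _)
      _ = |m t x| := mul_one _
  have hwgintν : Integrable (fun x => w x * ∑ s ∈ Ta, e s x) ν := by
    refine Integrable.mono' (hwintν.abs.const_mul (Ta.card : ℝ))
      (hwmeas.mul hgmeas).aestronglyMeasurable ?_
    filter_upwards [ae_all_iff.2 hele1] with x hx
    rw [Real.norm_eq_abs, abs_mul, abs_of_pos (hgpos x)]
    have hg1 : ∑ s ∈ Ta, e s x ≤ (Ta.card : ℝ) := by
      calc ∑ s ∈ Ta, e s x ≤ ∑ _s ∈ Ta, (1 : ℝ) :=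
            Finset.sum_le_sum fun s _ => hx s
        _ = (Ta.card : ℝ) := by simp
    calc |w x| * (∑ s ∈ Ta, e s x) ≤ |w x| * (Ta.card : ℝ) :=
          mul_le_mul_of_nonneg_left hg1 (abs_nonneg _)
      _ = (Ta.card : ℝ) * |w x| := mul_comm _ _
  -- key set-integral identity
  have hkey : ∀ B : Set 𝒳, MeasurableSet B →
      ∫ x in B, (w x * ∑ s ∈ Ta, e s x) ∂ν
        = ∫ x in B, (∑ t ∈ Ta, m t x * e t x) ∂ν := by
    intro B hB
    have hpm : ∀ t : 𝕋, MeasurableSet (X ⁻¹' B ∩ T ⁻¹' {t}) := fun t =>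
      (hX hB).inter (hT (measurableSet_singleton t))
    have hunion : X ⁻¹' B ∩ T ⁻¹' (Ta : Set 𝕋) = ⋃ t ∈ Ta, (X ⁻¹' B ∩ T ⁻¹' {t}) := by
      ext ω
      simp only [Set.mem_inter_iff, Set.mem_preimage, Finset.coe_sort_coe,
        Set.mem_iUnion, Set.mem_singleton_iff, Finset.mem_coe]
      constructor
      · rintro ⟨h1, h2⟩; exact ⟨T ω, h2, h1, rfl⟩
      · rintro ⟨t, ht, h1, h2⟩; exact ⟨h1, h2 ▸ ht⟩
    have hdisj : (↑Ta : Set 𝕋).Pairwise (Function.onFun Disjoint fun t => X ⁻¹' B ∩ T ⁻¹' {t}) := by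
      intro t _ s _ hts
      refine Set.disjoint_left.2 fun ω hω1 hω2 => hts ?_
      have h1 : T ω = t := hω1.2
      have h2 : T ω = s := hω2.2
      rw [← h1, h2]
    have hpieceint : ∀ t ∈ Ta, IntegrableOn (fun ω => Y (T ω) ω) (X ⁻¹' B ∩ T ⁻¹' {t}) P := by
      intro t _
      exact (hYint t).integrableOn.congr_fun
        (fun ω hω => by rw [show T ω = t from hω.2]) (hpm t)
    have hsplit : ∫ ω in X ⁻¹' B ∩ T ⁻¹' (Ta : Set 𝕋), Y (T ω) ω ∂P
        = ∑ t ∈ Ta, ∫ ω in X ⁻¹' B ∩ T ⁻¹' {t}, Y t ω ∂P := by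
      rw [hunion, integral_biUnion_finset Ta (fun t _ => hpm t) hdisj hpieceint]
      refine Finset.sum_congr rfl fun t _ => ?_
      refine setIntegral_congr_fun (hpm t) fun ω hω => ?_
      rw [show T ω = t from hω.2]
    have hL : ∫ x in B, (w x * ∑ s ∈ Ta, e s x) ∂ν
        = ∑ t ∈ Ta, ∫ ω in X ⁻¹' B, m t (X ω) * e t (X ω) ∂P := by
      rw [hmap (fun x => w x * ∑ s ∈ Ta, e s x) (hwmeas.mul hgmeas) B hB,
        ← hw B hB, hsplit]
      refine Finset.sum_congr rfl fun t _ => ?_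
      exact hUC t t B hB
    rw [hL]
    have hR : ∫ x in B, (∑ t ∈ Ta, m t x * e t x) ∂ν
        = ∑ t ∈ Ta, ∫ x in B, m t x * e t x ∂ν :=
      integral_finset_sum Ta fun t _ => (hfintν t).integrableOn
    rw [hR]
    exact Finset.sum_congr rfl fun t _ =>
      (hmap (fun x => m t x * e t x) ((hmmeas t).mul (hemeas t)) B hB).symm
  -- a.e. identity for w
  have haeeq : (fun x => w x * ∑ s ∈ Ta, e s x) =ᵐ[ν]
      fun x => ∑ t ∈ Ta, m t x * e t x :=
    ae_eq_of_forall_setIntegral_eq_of_sigmaFinite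
      (fun s _ _ => hwgintν.integrableOn)
      (fun s _ _ => (integrable_finset_sum Ta fun t _ => hfintν t).integrableOn)
      (fun s hs _ => hkey s hs)
  have haew : w =ᵐ[ν] fun x => ∑ t ∈ Ta, eCondAgg e Ta t x * m t x := by
    filter_upwards [haeeq] with x hx
    have hg0 : (∑ s ∈ Ta, e s x) ≠ 0 := (hgpos x).ne'
    have hwx : w x = (∑ t ∈ Ta, m t x * e t x) / ∑ s ∈ Ta, e s x :=
      (eq_div_iff hg0).2 hx
    rw [hwx, Finset.sum_div]
    refine Finset.sum_congr rfl fun t _ => ?_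
    simp only [eCondAgg]
    field_simp
  -- integrability of eCondAgg * m
  have hecint : ∀ t ∈ Ta, Integrable (fun x => eCondAgg e Ta t x * m t x) ν := by
    intro t ht
    have hecmeas : Measurable (fun x => eCondAgg e Ta t x) := by
      simp only [eCondAgg]
      exact (hemeas t).div hgmeas
    refine Integrable.mono' (hmintν t).abs
      (hecmeas.mul (hmmeas t)).aestronglyMeasurable
      (Filter.Eventually.of_forall fun x => ?_)
    rw [Real.norm_eq_abs, abs_mul]
    have hle : e t x ≤ ∑ s ∈ Ta, e s x :=
      Finset.single_le_sum (fun s _ => (hepos s x).le) ht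
    have hec1 : |eCondAgg e Ta t x| ≤ 1 := by
      rw [eCondAgg, abs_of_nonneg (div_nonneg (hepos t x).le (hgpos x).le)]
      exact div_le_one_of_le₀ hle (hgpos x).le
    calc |eCondAgg e Ta t x| * |m t x| ≤ 1 * |m t x| :=
          mul_le_mul_of_nonneg_right hec1 (abs_nonneg _)
      _ = |m t x| := one_mul _
  -- numerator identity
  have hnum : ∫ ω in X ⁻¹' Xg, w (X ω) ∂P
      = ∑ t ∈ Ta, ∫ ω in X ⁻¹' Xg, eCondAgg e Ta t (X ω) * m t (X ω) ∂P := by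
    rw [← hmap w hwmeas Xg hXg,
      setIntegral_congr_ae hXg (haew.mono fun x hx _ => hx),
      integral_finset_sum Ta fun t ht => (hecint t ht).integrableOn]
    refine Finset.sum_congr rfl fun t ht => ?_
    have hecmeas : Measurable (fun x => eCondAgg e Ta t x * m t x) := by
      simp only [eCondAgg]
      exact ((hemeas t).div hgmeas).mul (hmmeas t)
    exact hmap (fun x => eCondAgg e Ta t x * m t x) hecmeas Xg hXg
  -- assemble
  have hLHS : cexp P (X ⁻¹' Xg) (fun ω => w (X ω))
      = ∑ t ∈ Ta, cexp P (X ⁻¹' Xg) (fun ω => eCondAgg e Ta t (X ω) * m t (X ω)) := by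
    simp only [cexp]
    rw [hnum, Finset.sum_div]
  rw [hLHS, ← Finset.sum_add_distrib, ← Finset.sum_add_distrib]
  refine Finset.sum_congr rfl fun t _ => ?_
  simp only [ccov]
  ring
end

section
/- Bayes-weighting identity for the targeting covariance: under unconfoundedness, for every t ∈ 𝒯 and every measurable 𝒳_g with P(X ∈ 𝒳_g) > 0 and e_t(𝒳_g) > 0, one has E[ μ_t(X) | T = t, X ∈ 𝒳_g ] = E[ e_t(X) μ_t(X) | X ∈ 𝒳_g ] / e_t(𝒳_g), and consequently Cov( e_t(X)/e_t(𝒳_g), μ_t(X) | X ∈ 𝒳_g ) = E[ Y(t) | T = t, X ∈ 𝒳_g ] − μ_t(𝒳_g). -/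
open MeasureTheory

private lemma cexp_div_const' {Ω : Type*} [MeasurableSpace Ω] (P : Measure Ω) (A : Set Ω)
    (Z : Ω → ℝ) (c : ℝ) : cexp P A (fun ω => Z ω / c) = cexp P A Z / c := by
  unfold cexp
  rw [integral_div, div_right_comm]

/-- **Bayes-weighting identity for the targeting covariance.** Under
unconfoundedness, for every `t ∈ 𝒯` and every measurable `𝒳_g` with
`P(X ∈ 𝒳_g) > 0` and `e_t(𝒳_g) > 0`:
`E[μ_t(X) | T = t, X ∈ 𝒳_g] = E[e_t(X) μ_t(X) | X ∈ 𝒳_g] / e_t(𝒳_g)`, and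
consequently
`Cov(e_t(X)/e_t(𝒳_g), μ_t(X) | X ∈ 𝒳_g) = E[Y(t) | T = t, X ∈ 𝒳_g] − μ_t(𝒳_g)`.
Here `m t` is a version of `E[Y(t)|X = ·]` and `e t` a positive version of
`P(T = t|X = ·)`; unconfoundedness is stated in conditional-mean form (`hUC`). -/
theorem statement3
    {Ω 𝕋 𝒳 : Type*} [MeasurableSpace Ω] [Fintype 𝕋] [MeasurableSpace 𝕋]
    [MeasurableSingletonClass 𝕋] [MeasurableSpace 𝒳]
    (P : Measure Ω) [IsProbabilityMeasure P]
    (Y : 𝕋 → Ω → ℝ) (T : Ω → 𝕋) (X : Ω → 𝒳)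
    (hT : Measurable T) (hX : Measurable X)
    (hYmeas : ∀ t, Measurable (Y t))
    (hYint : ∀ t, Integrable (Y t) P)
    (hYsq : ∀ t, Integrable (fun ω => Y t ω ^ 2) P)
    (m : 𝕋 → 𝒳 → ℝ) (hmmeas : ∀ t, Measurable (m t))
    (hmint : ∀ t, Integrable (fun ω => m t (X ω)) P)
    (hm : ∀ t, ∀ B : Set 𝒳, MeasurableSet B →
      ∫ ω in X ⁻¹' B, Y t ω ∂P = ∫ ω in X ⁻¹' B, m t (X ω) ∂P)
    (e : 𝕋 → 𝒳 → ℝ) (hemeas : ∀ t, Measurable (e t))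
    (he : ∀ t, ∀ B : Set 𝒳, MeasurableSet B →
      (P (X ⁻¹' B ∩ T ⁻¹' {t})).toReal = ∫ ω in X ⁻¹' B, e t (X ω) ∂P)
    (hepos : ∀ t x, 0 < e t x)
    (hUC : ∀ t s, ∀ B : Set 𝒳, MeasurableSet B →
      ∫ ω in X ⁻¹' B ∩ T ⁻¹' {s}, Y t ω ∂P
        = ∫ ω in X ⁻¹' B, m t (X ω) * e s (X ω) ∂P) :
    ∀ t, ∀ Xg : Set 𝒳, MeasurableSet Xg → 0 < (P (X ⁻¹' Xg)).toReal →
      0 < cexp P (X ⁻¹' Xg) (fun ω => e t (X ω)) →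
      cexp P (T ⁻¹' {t} ∩ X ⁻¹' Xg) (fun ω => m t (X ω))
          = cexp P (X ⁻¹' Xg) (fun ω => e t (X ω) * m t (X ω))
              / cexp P (X ⁻¹' Xg) (fun ω => e t (X ω)) ∧
      ccov P (X ⁻¹' Xg)
          (fun ω => e t (X ω) / cexp P (X ⁻¹' Xg) (fun ω' => e t (X ω')))
          (fun ω => m t (X ω))
        = cexp P (T ⁻¹' {t} ∩ X ⁻¹' Xg) (Y t)
            - cexp P (X ⁻¹' Xg) (fun ω => m t (X ω)) := by
  intro t Xg hXg hPA hc
  have hAmeas : MeasurableSet (X ⁻¹' Xg) := hX hXg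
  have hTt : MeasurableSet (T ⁻¹' {t}) := hT (measurableSet_singleton t)
  have hp : (P (X ⁻¹' Xg)).toReal ≠ 0 := ne_of_gt hPA
  -- integrability of e∘X on X⁻¹'Xg
  have heX : IntegrableOn (fun ω => e t (X ω)) (X ⁻¹' Xg) P := by
    by_contra h
    rw [cexp, integral_undef h, zero_div] at hc
    exact lt_irrefl 0 hc
  -- numerator positivity
  have hI1 : 0 < ∫ ω in X ⁻¹' Xg, e t (X ω) ∂P := by
    have h2 := mul_pos hc hPA
    rw [cexp, div_mul_cancel₀ _ hp] at h2
    exact h2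
  have hI1' : (∫ ω in X ⁻¹' Xg, e t (X ω) ∂P) ≠ 0 := ne_of_gt hI1
  -- pushforward measures
  have hν_apply : ∀ B : Set 𝒳, MeasurableSet B →
      ((P.restrict (T ⁻¹' {t})).map X) B = P (X ⁻¹' B ∩ T ⁻¹' {t}) := by
    intro B hB
    rw [Measure.map_apply hX hB, Measure.restrict_apply (hX hB)]
  have he' : ∀ B : Set 𝒳, MeasurableSet B →
      (((P.restrict (T ⁻¹' {t})).map X) B).toReal = ∫ x in B, e t x ∂(P.map X) := by
    intro B hB
    rw [hν_apply B hB, he t B hB,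
      setIntegral_map hB (hemeas t).aestronglyMeasurable hX.aemeasurable]
  have heμ : IntegrableOn (e t) Xg (P.map X) := by
    rw [IntegrableOn, Measure.restrict_map hX hXg]
    exact (integrable_map_measure (hemeas t).aestronglyMeasurable hX.aemeasurable).mpr heX
  have hlt : ∫⁻ x in Xg, ENNReal.ofReal (e t x) ∂(P.map X) < ⊤ := heμ.lintegral_lt_top
  -- the pushforward of P restricted to {T = t} has density e t on Xg
  have hme : ((P.restrict (T ⁻¹' {t})).map X).restrict Xg
      = ((P.map X).restrict Xg).withDensity (fun x => ENNReal.ofReal (e t x)) := by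
    ext B hB
    rw [Measure.restrict_apply hB, withDensity_apply _ hB, Measure.restrict_restrict hB]
    have hBXg : MeasurableSet (B ∩ Xg) := hB.inter hXg
    have h1 : ((P.restrict (T ⁻¹' {t})).map X) (B ∩ Xg) ≠ ⊤ := by
      rw [hν_apply _ hBXg]
      exact (lt_of_le_of_lt prob_le_one (by norm_num)).ne
    have h2 : ∫⁻ x in B ∩ Xg, ENNReal.ofReal (e t x) ∂(P.map X) ≠ ⊤ :=
      (lt_of_le_of_lt (lintegral_mono_set Set.inter_subset_right) hlt).ne
    have h3 : (((P.restrict (T ⁻¹' {t})).map X) (B ∩ Xg)).toReal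
        = (∫⁻ x in B ∩ Xg, ENNReal.ofReal (e t x) ∂(P.map X)).toReal := by
      rw [he' _ hBXg, integral_eq_lintegral_of_nonneg_ae
        (Filter.Eventually.of_forall fun x => (hepos t x).le)
        (hemeas t).aestronglyMeasurable]
    exact (ENNReal.toReal_eq_toReal_iff' h1 h2).mp h3
  -- key identity
  have hkey : ∫ ω in T ⁻¹' {t} ∩ X ⁻¹' Xg, m t (X ω) ∂P
      = ∫ ω in X ⁻¹' Xg, e t (X ω) * m t (X ω) ∂P := by
    have L1 : ∫ x in Xg, m t x ∂((P.restrict (T ⁻¹' {t})).map X)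
        = ∫ ω in T ⁻¹' {t} ∩ X ⁻¹' Xg, m t (X ω) ∂P := by
      rw [setIntegral_map hXg (hmmeas t).aestronglyMeasurable hX.aemeasurable,
        Measure.restrict_restrict hAmeas, Set.inter_comm]
    have L2 : ∫ x in Xg, m t x ∂((P.restrict (T ⁻¹' {t})).map X)
        = ∫ x in Xg, e t x * m t x ∂(P.map X) := by
      have hrw : (fun x => ENNReal.ofReal (e t x))
          = fun x => ((Real.toNNReal (e t x) : NNReal) : ENNReal) := rfl
      calc ∫ x in Xg, m t x ∂((P.restrict (T ⁻¹' {t})).map X)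
          = ∫ x, m t x ∂(((P.restrict (T ⁻¹' {t})).map X).restrict Xg) := rfl
        _ = ∫ x, m t x ∂(((P.map X).restrict Xg).withDensity
              (fun x => ENNReal.ofReal (e t x))) := by rw [hme]
        _ = ∫ x in Xg, e t x * m t x ∂(P.map X) := by
            rw [hrw, integral_withDensity_eq_integral_smul (hemeas t).real_toNNReal (m t)]
            refine integral_congr_ae (Filter.Eventually.of_forall fun x => ?_)
            simp [NNReal.smul_def, Real.coe_toNNReal _ (hepos t x).le]
    have L3 : ∫ x in Xg, e t x * m t x ∂(P.map X)
        = ∫ ω in X ⁻¹' Xg, e t (X ω) * m t (X ω) ∂P := by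
      rw [setIntegral_map (f := fun x => e t x * m t x) hXg ((hemeas t).mul (hmmeas t)).aestronglyMeasurable
        hX.aemeasurable]
    rw [← L1, L2, L3]
  -- probability of the intersection
  have hPT : (P (T ⁻¹' {t} ∩ X ⁻¹' Xg)).toReal = ∫ ω in X ⁻¹' Xg, e t (X ω) ∂P := by
    rw [Set.inter_comm]
    exact he t Xg hXg
  -- numerator for Y
  have hYeq : ∫ ω in T ⁻¹' {t} ∩ X ⁻¹' Xg, Y t ω ∂P
      = ∫ ω in X ⁻¹' Xg, e t (X ω) * m t (X ω) ∂P := by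
    rw [Set.inter_comm, hUC t t Xg hXg]
    exact integral_congr_ae (Filter.Eventually.of_forall fun ω => mul_comm _ _)
  constructor
  · show (∫ ω in T ⁻¹' {t} ∩ X ⁻¹' Xg, m t (X ω) ∂P) / (P (T ⁻¹' {t} ∩ X ⁻¹' Xg)).toReal
      = ((∫ ω in X ⁻¹' Xg, e t (X ω) * m t (X ω) ∂P) / (P (X ⁻¹' Xg)).toReal)
        / ((∫ ω in X ⁻¹' Xg, e t (X ω) ∂P) / (P (X ⁻¹' Xg)).toReal)
    rw [hkey, hPT]
    field_simp
  · have hc' : cexp P (X ⁻¹' Xg) (fun ω' => e t (X ω')) ≠ 0 := ne_of_gt hc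
    have hmul : (fun ω => e t (X ω) / cexp P (X ⁻¹' Xg) (fun ω' => e t (X ω')) * m t (X ω))
        = fun ω => (e t (X ω) * m t (X ω)) / cexp P (X ⁻¹' Xg) (fun ω' => e t (X ω')) :=
      funext fun ω => div_mul_eq_mul_div _ _ _
    rw [ccov, hmul, cexp_div_const', cexp_div_const']
    show (∫ ω in X ⁻¹' Xg, e t (X ω) * m t (X ω) ∂P) / (P (X ⁻¹' Xg)).toReal
          / cexp P (X ⁻¹' Xg) (fun ω' => e t (X ω'))
        - ((∫ ω in X ⁻¹' Xg, e t (X ω) ∂P) / (P (X ⁻¹' Xg)).toReal)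
          / cexp P (X ⁻¹' Xg) (fun ω' => e t (X ω'))
          * ((∫ ω in X ⁻¹' Xg, m t (X ω) ∂P) / (P (X ⁻¹' Xg)).toReal)
        = (∫ ω in T ⁻¹' {t} ∩ X ⁻¹' Xg, Y t ω ∂P) / (P (T ⁻¹' {t} ∩ X ⁻¹' Xg)).toReal
          - (∫ ω in X ⁻¹' Xg, m t (X ω) ∂P) / (P (X ⁻¹' Xg)).toReal
    rw [hYeq, hPT]
    have hcc : cexp P (X ⁻¹' Xg) (fun ω' => e t (X ω'))
        = (∫ ω in X ⁻¹' Xg, e t (X ω) ∂P) / (P (X ⁻¹' Xg)).toReal := rfl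
    rw [hcc]
    field_simp
end

section
/- Rewriting of the group-targeting parameter δ_3 as a double sum over effect-heterogeneity terms: Σ_{t∈𝒯_a} (e_{ta}(𝒳_g) − e_{ta})(μ_t(𝒳_g) − μ_t) − Σ_{t'∈𝒯_{a'}} (e_{t'a'}(𝒳_g) − e_{t'a'})(μ_{t'}(𝒳_g) − μ_{t'}) = Σ_{t∈𝒯_a} Σ_{t'∈𝒯_{a'}} ( e_{ta}(𝒳_g) e_{t'a'}(𝒳_g) − e_{ta} e_{t'a'} ) ( τ_{t,t'}(𝒳_g) − τ_{t,t'} ). -/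
/-- **Rewriting of the group-targeting parameter δ₃** as a double sum over
effect-heterogeneity terms:
`Σ_{t∈𝒯_a} (e_{ta}(𝒳_g) − e_{ta})(μ_t(𝒳_g) − μ_t)
  − Σ_{t'∈𝒯_{a'}} (e_{t'a'}(𝒳_g) − e_{t'a'})(μ_{t'}(𝒳_g) − μ_{t'})
  = Σ_{t∈𝒯_a} Σ_{t'∈𝒯_{a'}} (e_{ta}(𝒳_g) e_{t'a'}(𝒳_g) − e_{ta} e_{t'a'})
      (τ_{t,t'}(𝒳_g) − τ_{t,t'})`,
where `τ_{t,t'} = μ_t − μ_{t'}` and `τ_{t,t'}(𝒳_g) = μ_t(𝒳_g) − μ_{t'}(𝒳_g)`.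
Here `eA t` stands for `e_{ta}`, `egA t` for `e_{ta}(𝒳_g)`, `eA' t'` for
`e_{t'a'}`, `egA' t'` for `e_{t'a'}(𝒳_g)`, `μ t` for `μ_t`, `μg t` for `μ_t(𝒳_g)`. -/
theorem statement8 {𝕋 : Type*} (Ta Ta' : Finset 𝕋)
    (eA egA eA' egA' μ μg : 𝕋 → ℝ)
    (hA : ∑ t ∈ Ta, eA t = 1) (hgA : ∑ t ∈ Ta, egA t = 1)
    (hA' : ∑ t' ∈ Ta', eA' t' = 1) (hgA' : ∑ t' ∈ Ta', egA' t' = 1) :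
    (∑ t ∈ Ta, (egA t - eA t) * (μg t - μ t))
        - (∑ t' ∈ Ta', (egA' t' - eA' t') * (μg t' - μ t'))
      = ∑ t ∈ Ta, ∑ t' ∈ Ta',
          (egA t * egA' t' - eA t * eA' t')
            * ((μg t - μg t') - (μ t - μ t')) := by
  set f : 𝕋 → ℝ := fun t => μg t - μ t with hf
  have aux : ∀ (S : Finset 𝕋) (e' : 𝕋 → ℝ), (∑ x ∈ S, e' x = 1) → ∀ c : ℝ,
      ∑ x ∈ S, e' x * (c - f x) = c - ∑ x ∈ S, e' x * f x := by
    intro S e' h c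
    simp [mul_sub, Finset.sum_sub_distrib, ← Finset.sum_mul, h]
  have key : ∀ t ∈ Ta, ∑ t' ∈ Ta',
      (egA t * egA' t' - eA t * eA' t') * ((μg t - μg t') - (μ t - μ t'))
      = egA t * (f t - ∑ t' ∈ Ta', egA' t' * f t')
        - eA t * (f t - ∑ t' ∈ Ta', eA' t' * f t') := by
    intro t _
    have : ∀ t' ∈ Ta', (egA t * egA' t' - eA t * eA' t') * ((μg t - μg t') - (μ t - μ t'))
        = egA t * (egA' t' * (f t - f t')) - eA t * (eA' t' * (f t - f t')) := by
      intro t' _; simp only [hf]; ring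
    rw [Finset.sum_congr rfl this, Finset.sum_sub_distrib, ← Finset.mul_sum, ← Finset.mul_sum,
      aux Ta' egA' hgA', aux Ta' eA' hA']
  rw [Finset.sum_congr rfl key]
  simp only [mul_sub, sub_mul, Finset.sum_sub_distrib, ← Finset.sum_mul, hA, hgA]
  simp only [hf, mul_sub, Finset.sum_sub_distrib]
  ring
end

section
/- Composition-adjustment vanishing under aggregate randomization: if P(T ∈ 𝒯_a | X = x) = P(T ∈ 𝒯_a | X ∈ 𝒳_g) for almost every x ∈ 𝒳_g, then for every t ∈ 𝒯_a one has E[ e_{ta}(X) | X ∈ 𝒳_g ] = e_{ta}(𝒳_g) = e_t(𝒳_g) / P(T ∈ 𝒯_a | X ∈ 𝒳_g); consequently the aggregate composition adjustment term d_5(a,g) = Σ_{t∈𝒯_a} ( E[e_{ta}(X)|X∈𝒳_g] − e_{ta}(𝒳_g) ) μ_t(𝒳_g) is zero. -/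
open MeasureTheory

/-- **Composition-adjustment vanishing under aggregate randomization.** If
`P(T ∈ 𝒯_a | X = x) = P(T ∈ 𝒯_a | X ∈ 𝒳_g)` for almost every `x ∈ 𝒳_g` (stated as
`hrand`, with `Σ_{s∈𝒯_a} e_s(X)` the version of `P(T ∈ 𝒯_a | X)`), then for every
`t ∈ 𝒯_a` one has
`E[e_{ta}(X) | X ∈ 𝒳_g] = e_{ta}(𝒳_g) = e_t(𝒳_g) / P(T ∈ 𝒯_a | X ∈ 𝒳_g)`;
consequently the aggregate composition adjustment
`d₅(a,g) = Σ_{t∈𝒯_a} (E[e_{ta}(X)|X∈𝒳_g] − e_{ta}(𝒳_g)) μ_t(𝒳_g)` is zero. -/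
theorem statement10
    {Ω 𝕋 𝒳 : Type*} [MeasurableSpace Ω] [Fintype 𝕋] [MeasurableSpace 𝕋]
    [MeasurableSingletonClass 𝕋] [MeasurableSpace 𝒳]
    (P : Measure Ω) [IsProbabilityMeasure P]
    (Y : 𝕋 → Ω → ℝ) (T : Ω → 𝕋) (X : Ω → 𝒳)
    (hT : Measurable T) (hX : Measurable X)
    (hYint : ∀ t, Integrable (Y t) P)
    (m : 𝕋 → 𝒳 → ℝ) (hmmeas : ∀ t, Measurable (m t))
    (hmint : ∀ t, Integrable (fun ω => m t (X ω)) P)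
    (hm : ∀ t, ∀ B : Set 𝒳, MeasurableSet B →
      ∫ ω in X ⁻¹' B, Y t ω ∂P = ∫ ω in X ⁻¹' B, m t (X ω) ∂P)
    (e : 𝕋 → 𝒳 → ℝ) (hemeas : ∀ t, Measurable (e t))
    (he : ∀ t, ∀ B : Set 𝒳, MeasurableSet B →
      (P (X ⁻¹' B ∩ T ⁻¹' {t})).toReal = ∫ ω in X ⁻¹' B, e t (X ω) ∂P)
    (hepos : ∀ t x, 0 < e t x)
    (Ta : Finset 𝕋) (Xg : Set 𝒳) (hXg : MeasurableSet Xg)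
    (hPXg : 0 < (P (X ⁻¹' Xg)).toReal)
    (hPTaXg : 0 < (P (T ⁻¹' (Ta : Set 𝕋) ∩ X ⁻¹' Xg)).toReal)
    -- aggregate randomization: `P(T∈𝒯_a | X = x) = P(T∈𝒯_a | X∈𝒳_g)` a.e. on `𝒳_g`
    (hrand : ∀ᵐ ω ∂P.restrict (X ⁻¹' Xg),
      (∑ s ∈ Ta, e s (X ω))
        = (P (T ⁻¹' (Ta : Set 𝕋) ∩ X ⁻¹' Xg)).toReal / (P (X ⁻¹' Xg)).toReal) :
    (∀ t ∈ Ta,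
      cexp P (X ⁻¹' Xg) (fun ω => eCondAgg e Ta t (X ω))
          = cexp P (X ⁻¹' Xg ∩ T ⁻¹' (Ta : Set 𝕋)) (fun ω => eCondAgg e Ta t (X ω)) ∧
      cexp P (X ⁻¹' Xg ∩ T ⁻¹' (Ta : Set 𝕋)) (fun ω => eCondAgg e Ta t (X ω))
          = cexp P (X ⁻¹' Xg) (fun ω => e t (X ω))
              / ((P (T ⁻¹' (Ta : Set 𝕋) ∩ X ⁻¹' Xg)).toReal / (P (X ⁻¹' Xg)).toReal)) ∧
    (∑ t ∈ Ta,
        (cexp P (X ⁻¹' Xg) (fun ω => eCondAgg e Ta t (X ω))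
            - cexp P (X ⁻¹' Xg ∩ T ⁻¹' (Ta : Set 𝕋)) (fun ω => eCondAgg e Ta t (X ω)))
          * cexp P (X ⁻¹' Xg) (fun ω => m t (X ω))) = 0 := by
  classical
  have hXgm : MeasurableSet (X ⁻¹' Xg) := hX hXg
  have hTs : ∀ s : 𝕋, MeasurableSet (T ⁻¹' {s}) := fun s => hT (measurableSet_singleton s)
  set c : ℝ := (P (T ⁻¹' (Ta : Set 𝕋) ∩ X ⁻¹' Xg)).toReal / (P (X ⁻¹' Xg)).toReal with hc
  have hcpos : 0 < c := div_pos hPTaXg hPXg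
  have hcne : c ≠ 0 := hcpos.ne'
  have hPXgne : (P (X ⁻¹' Xg)).toReal ≠ 0 := hPXg.ne'
  have hbound : ∀ s ∈ Ta, ∀ᵐ ω ∂P.restrict (X ⁻¹' Xg), e s (X ω) ≤ c := by
    intro s hs
    filter_upwards [hrand] with ω hω
    calc e s (X ω) ≤ ∑ u ∈ Ta, e u (X ω) :=
          Finset.single_le_sum (fun u _ => (hepos u (X ω)).le) hs
      _ = c := hω
  -- key lintegral version of `he` on subsets of `Xg`
  have hkey : ∀ s ∈ Ta, ∀ B : Set 𝒳, MeasurableSet B →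
      ∫⁻ ω in X ⁻¹' (B ∩ Xg), ENNReal.ofReal (e s (X ω)) ∂P
        = P (X ⁻¹' (B ∩ Xg) ∩ T ⁻¹' {s}) := by
    intro s hs B hB
    have hBXg : MeasurableSet (B ∩ Xg) := hB.inter hXg
    have hsub : X ⁻¹' (B ∩ Xg) ⊆ X ⁻¹' Xg := Set.preimage_mono Set.inter_subset_right
    have hae : ∀ᵐ ω ∂P.restrict (X ⁻¹' (B ∩ Xg)), e s (X ω) ≤ c :=
      (hbound s hs).filter_mono (ae_mono (Measure.restrict_mono hsub le_rfl))
    have h2 : ∫ ω in X ⁻¹' (B ∩ Xg), e s (X ω) ∂P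
        = (∫⁻ ω in X ⁻¹' (B ∩ Xg), ENNReal.ofReal (e s (X ω)) ∂P).toReal :=
      integral_eq_lintegral_of_nonneg_ae (ae_of_all _ fun ω => (hepos s (X ω)).le)
        ((hemeas s).comp hX).aestronglyMeasurable
    have hfin : ∫⁻ ω in X ⁻¹' (B ∩ Xg), ENNReal.ofReal (e s (X ω)) ∂P ≠ ⊤ := by
      have hle : ∫⁻ ω in X ⁻¹' (B ∩ Xg), ENNReal.ofReal (e s (X ω)) ∂P
          ≤ ∫⁻ _ω in X ⁻¹' (B ∩ Xg), ENNReal.ofReal c ∂P :=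
        lintegral_mono_ae (hae.mono fun ω h => ENNReal.ofReal_le_ofReal h)
      refine ne_top_of_le_ne_top ?_ hle
      rw [setLIntegral_const]
      exact ENNReal.mul_ne_top ENNReal.ofReal_ne_top (measure_ne_top P _)
    have h3 : (P (X ⁻¹' (B ∩ Xg) ∩ T ⁻¹' {s})).toReal
        = (∫⁻ ω in X ⁻¹' (B ∩ Xg), ENNReal.ofReal (e s (X ω)) ∂P).toReal :=
      (he s (B ∩ Xg) hBXg).trans h2
    exact ((ENNReal.toReal_eq_toReal_iff' (measure_ne_top P _) hfin).mp h3).symm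
  -- measure identity on `Xg`
  have hmeq : ∀ s ∈ Ta,
      (Measure.map X (P.restrict (T ⁻¹' {s}))).restrict Xg
        = ((Measure.map X P).restrict Xg).withDensity (fun x => ENNReal.ofReal (e s x)) := by
    intro s hs
    ext B hB
    rw [Measure.restrict_apply hB, Measure.map_apply hX (hB.inter hXg),
        Measure.restrict_apply (hX (hB.inter hXg)),
        withDensity_apply _ hB, Measure.restrict_restrict hB,
        setLIntegral_map (hB.inter hXg) ((hemeas s).ennreal_ofReal) hX,
        hkey s hs B hB]
  -- lintegral identity
  have hlin : ∀ t ∈ Ta, ∀ s ∈ Ta,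
      ∫⁻ ω in X ⁻¹' Xg ∩ T ⁻¹' {s}, ENNReal.ofReal (e t (X ω)) ∂P
        = ∫⁻ ω in X ⁻¹' Xg,
            ENNReal.ofReal (e s (X ω)) * ENNReal.ofReal (e t (X ω)) ∂P := by
    intro t ht s hs
    have h1 : ∫⁻ x in Xg, ENNReal.ofReal (e t x)
          ∂(Measure.map X (P.restrict (T ⁻¹' {s})))
        = ∫⁻ x, ENNReal.ofReal (e t x)
          ∂(((Measure.map X P).restrict Xg).withDensity
              (fun x => ENNReal.ofReal (e s x))) := by
      rw [← hmeq s hs]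
    rw [setLIntegral_map hXg ((hemeas t).ennreal_ofReal) hX,
        Measure.restrict_restrict hXgm,
        lintegral_withDensity_eq_lintegral_mul _
          ((hemeas s).ennreal_ofReal)
          ((hemeas t).ennreal_ofReal)] at h1
    simp only [Pi.mul_apply] at h1
    rw [setLIntegral_map (f := fun a => ENNReal.ofReal (e s a) * ENNReal.ofReal (e t a)) hXg
          ((hemeas s).ennreal_ofReal.mul
            ((hemeas t).ennreal_ofReal)) hX] at h1
    exact h1
  -- real version
  have hreal : ∀ t ∈ Ta, ∀ s ∈ Ta,
      ∫ ω in X ⁻¹' Xg ∩ T ⁻¹' {s}, e t (X ω) ∂P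
        = ∫ ω in X ⁻¹' Xg, e s (X ω) * e t (X ω) ∂P := by
    intro t ht s hs
    have hml : ∫⁻ ω in X ⁻¹' Xg, ENNReal.ofReal (e s (X ω) * e t (X ω)) ∂P
        = ∫⁻ ω in X ⁻¹' Xg,
            ENNReal.ofReal (e s (X ω)) * ENNReal.ofReal (e t (X ω)) ∂P :=
      lintegral_congr fun ω => ENNReal.ofReal_mul (hepos s (X ω)).le
    rw [integral_eq_lintegral_of_nonneg_ae (ae_of_all _ fun ω => (hepos t (X ω)).le)
          ((hemeas t).comp hX).aestronglyMeasurable,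
        integral_eq_lintegral_of_nonneg_ae
          (ae_of_all _ fun ω => mul_nonneg (hepos s (X ω)).le (hepos t (X ω)).le)
          (((hemeas s).comp hX).mul ((hemeas t).comp hX)).aestronglyMeasurable,
        hml, hlin t ht s hs]
  -- integrability facts
  have hintmul : ∀ t ∈ Ta, ∀ s ∈ Ta,
      IntegrableOn (fun ω => e s (X ω) * e t (X ω)) (X ⁻¹' Xg) P := by
    intro t ht s hs
    refine Integrable.mono' (integrable_const (c * c))
      (((hemeas s).comp hX).mul ((hemeas t).comp hX)).aestronglyMeasurable ?_
    filter_upwards [hbound t ht, hbound s hs] with ω h1 h2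
    rw [Real.norm_eq_abs, abs_of_nonneg (mul_nonneg (hepos s (X ω)).le (hepos t (X ω)).le)]
    exact mul_le_mul h2 h1 (hepos t (X ω)).le hcpos.le
  have hintXg : ∀ t ∈ Ta, IntegrableOn (fun ω => e t (X ω)) (X ⁻¹' Xg) P := by
    intro t ht
    refine Integrable.mono' (integrable_const c)
      ((hemeas t).comp hX).aestronglyMeasurable ?_
    filter_upwards [hbound t ht] with ω h
    rw [Real.norm_eq_abs, abs_of_nonneg (hepos t (X ω)).le]; exact h
  -- the key integral identity
  have hIcap : ∀ t ∈ Ta,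
      ∫ ω in X ⁻¹' Xg ∩ T ⁻¹' (Ta : Set 𝕋), e t (X ω) ∂P
        = c * ∫ ω in X ⁻¹' Xg, e t (X ω) ∂P := by
    intro t ht
    have hU : X ⁻¹' Xg ∩ T ⁻¹' (Ta : Set 𝕋) = ⋃ s ∈ Ta, (X ⁻¹' Xg ∩ T ⁻¹' {s}) := by
      ext ω; simp
    rw [hU, integral_biUnion_finset Ta (fun s _ => hXgm.inter (hTs s))
        (fun s _ u _ hsu => Set.disjoint_left.mpr fun ω h1 h2 => hsu (h1.2.symm.trans h2.2))
        (fun s _ => (hintXg t ht).mono_set Set.inter_subset_left),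
        Finset.sum_congr rfl (fun s hs => hreal t ht s hs),
        ← integral_finset_sum Ta (fun s hs => hintmul t ht s hs)]
    have hcongr : ∀ᵐ ω ∂P.restrict (X ⁻¹' Xg),
        (∑ s ∈ Ta, e s (X ω) * e t (X ω)) = c * e t (X ω) := by
      filter_upwards [hrand] with ω hω
      rw [← Finset.sum_mul, hω]
    rw [integral_congr_ae hcongr, integral_const_mul]
  -- main per-t claims
  have hmain : ∀ t ∈ Ta,
      cexp P (X ⁻¹' Xg) (fun ω => eCondAgg e Ta t (X ω))
          = cexp P (X ⁻¹' Xg ∩ T ⁻¹' (Ta : Set 𝕋)) (fun ω => eCondAgg e Ta t (X ω)) ∧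
      cexp P (X ⁻¹' Xg ∩ T ⁻¹' (Ta : Set 𝕋)) (fun ω => eCondAgg e Ta t (X ω))
          = cexp P (X ⁻¹' Xg) (fun ω => e t (X ω)) / c := by
    intro t ht
    have haeeq : ∀ᵐ ω ∂P.restrict (X ⁻¹' Xg),
        eCondAgg e Ta t (X ω) = e t (X ω) / c := by
      filter_upwards [hrand] with ω hω
      simp only [eCondAgg]; rw [hω]
    have hnum1 : ∫ ω in X ⁻¹' Xg, eCondAgg e Ta t (X ω) ∂P
        = (∫ ω in X ⁻¹' Xg, e t (X ω) ∂P) / c := by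
      rw [integral_congr_ae haeeq, integral_div]
    have haeeq2 : ∀ᵐ ω ∂P.restrict (X ⁻¹' Xg ∩ T ⁻¹' (Ta : Set 𝕋)),
        eCondAgg e Ta t (X ω) = e t (X ω) / c :=
      haeeq.filter_mono (ae_mono (Measure.restrict_mono Set.inter_subset_left le_rfl))
    have hnum2 : ∫ ω in X ⁻¹' Xg ∩ T ⁻¹' (Ta : Set 𝕋), eCondAgg e Ta t (X ω) ∂P
        = ∫ ω in X ⁻¹' Xg, e t (X ω) ∂P := by
      rw [integral_congr_ae haeeq2, integral_div, hIcap t ht]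
      exact mul_div_cancel_left₀ _ hcne
    have hden2 : (P (X ⁻¹' Xg ∩ T ⁻¹' (Ta : Set 𝕋))).toReal
        = c * (P (X ⁻¹' Xg)).toReal := by
      rw [Set.inter_comm (X ⁻¹' Xg) (T ⁻¹' (Ta : Set 𝕋)), hc, div_mul_cancel₀ _ hPXgne]
    constructor
    · simp only [cexp]
      rw [hnum1, hnum2, hden2, div_div]
    · simp only [cexp]
      rw [hnum2, hden2, div_div, mul_comm]
  refine ⟨hmain, Finset.sum_eq_zero fun t ht => ?_⟩
  rw [(hmain t ht).1, sub_self, zero_mul]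
end

section
/- Under full randomization of the effective treatment (T independent of X), all treatment-heterogeneity decomposition parameters vanish: for any aggregations 𝒯_a, 𝒯_{a'} and groups 𝒳_g, 𝒳_{g'}, the parameters Δ_2, Δ_3, Δ_4, Δ_{4'} and Δ_5 are all zero, so both the group differences-in-means and the adjusted group differences-in-means equal the effect-heterogeneity parameter Δ_1 = Σ_{t∈𝒯_a} Σ_{t'∈𝒯_{a'}} e_{ta} e_{t'a'} ( τ_{t,t'}(𝒳_g) − τ_{t,t'}(𝒳_{g'}) ). -/
open MeasureTheory

lemma ae_const_of_setIntegral {𝒳 : Type*} [MeasurableSpace 𝒳]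
    (ν : Measure 𝒳) [IsProbabilityMeasure ν] (f : 𝒳 → ℝ) (hf : Measurable f)
    (hfpos : ∀ x, 0 < f x) (c : ℝ)
    (hc : ∀ B : Set 𝒳, MeasurableSet B → ∫ x in B, f x ∂ν = (ν B).toReal * c) :
    f =ᵐ[ν] fun _ => c := by
  have hBmeas : ∀ n : ℕ, MeasurableSet {x | f x ≤ (n : ℝ)} := fun n =>
    measurableSet_le hf measurable_const
  have hunion : (⋃ n : ℕ, {x | f x ≤ (n : ℝ)}) = Set.univ := by
    ext x; simp only [Set.mem_iUnion, Set.mem_setOf_eq, Set.mem_univ, iff_true]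
    exact exists_nat_ge (f x)
  have hIntOn : ∀ n : ℕ, IntegrableOn f {x | f x ≤ (n : ℝ)} ν := by
    intro n
    refine Integrable.mono' (integrable_const (n : ℝ)) hf.aestronglyMeasurable ?_
    filter_upwards [ae_restrict_mem (hBmeas n)] with x hx
    rw [Real.norm_eq_abs, abs_of_pos (hfpos x)]
    exact hx
  -- 0 ≤ c
  have hc0 : 0 ≤ c := by
    by_contra h
    push_neg at h
    have hpos : ∃ n : ℕ, 0 < ν {x | f x ≤ (n : ℝ)} := by
      by_contra hno
      push_neg at hno
      have : ν (⋃ n : ℕ, {x | f x ≤ (n : ℝ)}) = 0 :=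
        measure_iUnion_null fun n => le_antisymm (hno n) zero_le
      rw [hunion, measure_univ] at this; exact one_ne_zero this
    obtain ⟨n, hn⟩ := hpos
    have h1 : 0 ≤ ∫ x in {x | f x ≤ (n : ℝ)}, f x ∂ν :=
      setIntegral_nonneg (hBmeas n) fun x _ => (hfpos x).le
    rw [hc _ (hBmeas n)] at h1
    have : (ν {x | f x ≤ (n : ℝ)}).toReal * c < 0 :=
      mul_neg_of_pos_of_neg (ENNReal.toReal_pos hn.ne' (measure_ne_top ν _)) h
    linarith
  -- integrability
  have hint : Integrable f ν := by
    refine ⟨hf.aestronglyMeasurable, ?_⟩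
    rw [hasFiniteIntegral_iff_ofReal (Filter.Eventually.of_forall fun x => (hfpos x).le)]
    have key : ∫⁻ x, ENNReal.ofReal (f x) ∂ν
        = ⨆ n : ℕ, ∫⁻ x in {x | f x ≤ (n : ℝ)}, ENNReal.ofReal (f x) ∂ν := by
      have : ∀ x, ENNReal.ofReal (f x)
          = ⨆ n : ℕ, ({x | f x ≤ (n : ℝ)}).indicator (fun y => ENNReal.ofReal (f y)) x := by
        intro x
        obtain ⟨n, hn⟩ := exists_nat_ge (f x)
        refine le_antisymm ?_ ?_
        · exact le_iSup_of_le n (le_of_eq (Set.indicator_of_mem (show x ∈ {y | f y ≤ (n:ℝ)} from hn) (fun y => ENNReal.ofReal (f y))).symm)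
        · exact iSup_le fun m => Set.indicator_le_self' (fun _ _ => zero_le) x
      calc ∫⁻ x, ENNReal.ofReal (f x) ∂ν
          = ∫⁻ x, ⨆ n : ℕ, ({x | f x ≤ (n : ℝ)}).indicator (fun y => ENNReal.ofReal (f y)) x ∂ν := by
            exact lintegral_congr this
        _ = ⨆ n : ℕ, ∫⁻ x, ({x | f x ≤ (n : ℝ)}).indicator (fun y => ENNReal.ofReal (f y)) x ∂ν := by
            refine lintegral_iSup (fun n => (hf.ennreal_ofReal).indicator (hBmeas n)) ?_
            intro a b hab x
            have hsub : {x : 𝒳 | f x ≤ (a : ℝ)} ⊆ {x : 𝒳 | f x ≤ (b : ℝ)} := fun y (hy : f y ≤ (a:ℝ)) =>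
              show f y ≤ (b:ℝ) from le_trans hy (Nat.cast_le.mpr hab)
            exact Set.indicator_le_indicator_of_subset hsub (fun _ => zero_le) x
        _ = ⨆ n : ℕ, ∫⁻ x in {x | f x ≤ (n : ℝ)}, ENNReal.ofReal (f x) ∂ν := by
            simp_rw [lintegral_indicator (hBmeas _)]
    rw [key]
    refine lt_of_le_of_lt (iSup_le fun n => ?_) (show ENNReal.ofReal c < ⊤ from ENNReal.ofReal_lt_top)
    rw [← ofReal_integral_eq_lintegral_ofReal (hIntOn n)
      (Filter.Eventually.of_forall fun x => (hfpos x).le)]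
    rw [hc _ (hBmeas n)]
    apply ENNReal.ofReal_le_ofReal
    calc (ν {x | f x ≤ (n : ℝ)}).toReal * c ≤ 1 * c := by
          apply mul_le_mul_of_nonneg_right _ hc0
          exact ENNReal.toReal_le_of_le_ofReal zero_le_one (by simpa using prob_le_one)
      _ = c := one_mul c
  -- ae equality
  refine ae_eq_of_forall_setIntegral_eq_of_sigmaFinite (fun s hs _ => hint.integrableOn)
    (fun s hs _ => (integrable_const c).integrableOn) (fun s hs _ => ?_)
  rw [hc s hs, setIntegral_const, smul_eq_mul, measureReal_def]


lemma cexp_congr {Ω : Type*} [MeasurableSpace Ω] {P : Measure Ω} {A : Set Ω}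
    {Z Z' : Ω → ℝ} (h : Z =ᵐ[P] Z') : cexp P A Z = cexp P A Z' := by
  unfold cexp
  rw [integral_congr_ae (ae_restrict_of_ae h)]

lemma cexp_const {Ω : Type*} [MeasurableSpace Ω] {P : Measure Ω} {A : Set Ω}
    {c : ℝ} (hA : (P A).toReal ≠ 0) : cexp P A (fun _ => c) = c := by
  unfold cexp
  rw [setIntegral_const, smul_eq_mul, measureReal_def]
  field_simp

lemma cexp_const_mul {Ω : Type*} [MeasurableSpace Ω] (P : Measure Ω) (A : Set Ω)
    (c : ℝ) (W : Ω → ℝ) : cexp P A (fun ω => c * W ω) = c * cexp P A W := by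
  unfold cexp
  simp only []
  rw [MeasureTheory.integral_const_mul, mul_div_assoc]

lemma ccov_zero_of_ae_const {Ω : Type*} [MeasurableSpace Ω] {P : Measure Ω} {A : Set Ω}
    {Z : Ω → ℝ} {c : ℝ} (h : Z =ᵐ[P] fun _ => c) (hA : (P A).toReal ≠ 0)
    (W : Ω → ℝ) : ccov P A Z W = 0 := by
  unfold ccov
  rw [cexp_congr h, cexp_const hA,
    cexp_congr (Z' := fun ω => c * W ω) (h.mono fun ω hω => by simp [hω]),
    cexp_const_mul, sub_self]

lemma sum_algebra {𝕋 : Type*} (Ta Ta' : Finset 𝕋) (A B f g : 𝕋 → ℝ)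
    (hA : ∑ t ∈ Ta, A t = 1) (hB : ∑ t ∈ Ta', B t = 1) :
    ∑ t ∈ Ta, ∑ t' ∈ Ta', A t * B t' * ((f t - f t') - (g t - g t'))
      = (∑ t ∈ Ta, A t * f t - ∑ t' ∈ Ta', B t' * f t')
        - (∑ t ∈ Ta, A t * g t - ∑ t' ∈ Ta', B t' * g t') := by
  have expand : ∀ t t', A t * B t' * ((f t - f t') - (g t - g t'))
      = (A t * (f t - g t)) * B t' - A t * (B t' * (f t' - g t')) := by
    intros; ring
  simp_rw [expand, Finset.sum_sub_distrib, ← Finset.mul_sum, ← Finset.sum_mul, hA, hB]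
  simp only [mul_one, one_mul]
  rw [show (∑ t' ∈ Ta', B t' * (f t' - g t')) = ∑ t' ∈ Ta', (B t' * f t' - B t' * g t') from
    Finset.sum_congr rfl fun t' _ => by ring]
  rw [show (∑ t ∈ Ta, A t * (f t - g t)) = ∑ t ∈ Ta, (A t * f t - A t * g t) from
    Finset.sum_congr rfl fun t _ => by ring]
  rw [Finset.sum_sub_distrib, Finset.sum_sub_distrib]
  ring

namespace Decomp

variable {Ω 𝕋 𝒳 : Type*} [MeasurableSpace Ω]

/-- `μ_t = E[μ_t(X)]`. -/
noncomputable def muAll (P : Measure Ω) (X : Ω → 𝒳) (m : 𝕋 → 𝒳 → ℝ) (t : 𝕋) : ℝ :=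
  ∫ ω, m t (X ω) ∂P

/-- `μ_t(𝒳_g) = E[μ_t(X) | X ∈ 𝒳_g]`. -/
noncomputable def muG (P : Measure Ω) (X : Ω → 𝒳) (m : 𝕋 → 𝒳 → ℝ)
    (Xg : Set 𝒳) (t : 𝕋) : ℝ :=
  cexp P (X ⁻¹' Xg) fun ω => m t (X ω)

/-- `e_{ta} = E[e_{ta}(X) | T ∈ 𝒯_a]`. -/
noncomputable def etaU (P : Measure Ω) (T : Ω → 𝕋) (X : Ω → 𝒳)
    (e : 𝕋 → 𝒳 → ℝ) (Ta : Finset 𝕋) (t : 𝕋) : ℝ :=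
  cexp P (T ⁻¹' (Ta : Set 𝕋)) fun ω => eCondAgg e Ta t (X ω)

/-- `e_{ta}(𝒳_g) = E[e_{ta}(X) | X ∈ 𝒳_g, T ∈ 𝒯_a]`. -/
noncomputable def etaG (P : Measure Ω) (T : Ω → 𝕋) (X : Ω → 𝒳)
    (e : 𝕋 → 𝒳 → ℝ) (Ta : Finset 𝕋) (Xg : Set 𝒳) (t : 𝕋) : ℝ :=
  cexp P (X ⁻¹' Xg ∩ T ⁻¹' (Ta : Set 𝕋)) fun ω => eCondAgg e Ta t (X ω)

/-- `E[e_{ta}(X) | X ∈ 𝒳_g]`. -/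
noncomputable def etaBarG (P : Measure Ω) (X : Ω → 𝒳)
    (e : 𝕋 → 𝒳 → ℝ) (Ta : Finset 𝕋) (Xg : Set 𝒳) (t : 𝕋) : ℝ :=
  cexp P (X ⁻¹' Xg) fun ω => eCondAgg e Ta t (X ω)

/-- `d₁(a,g) = Σ_{t∈𝒯_a} e_{ta} (μ_t(𝒳_g) − μ_t)`. -/
noncomputable def d1 (P : Measure Ω) (T : Ω → 𝕋) (X : Ω → 𝒳)
    (e m : 𝕋 → 𝒳 → ℝ) (Ta : Finset 𝕋) (Xg : Set 𝒳) : ℝ :=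
  ∑ t ∈ Ta, etaU P T X e Ta t * (muG P X m Xg t - muAll P X m t)

/-- `d₂(a,g) = Σ_{t∈𝒯_a} (e_{ta}(𝒳_g) − e_{ta}) μ_t`. -/
noncomputable def d2 (P : Measure Ω) (T : Ω → 𝕋) (X : Ω → 𝒳)
    (e m : 𝕋 → 𝒳 → ℝ) (Ta : Finset 𝕋) (Xg : Set 𝒳) : ℝ :=
  ∑ t ∈ Ta, (etaG P T X e Ta Xg t - etaU P T X e Ta t) * muAll P X m t

/-- `d₃(a,g) = Σ_{t∈𝒯_a} (e_{ta}(𝒳_g) − e_{ta}) (μ_t(𝒳_g) − μ_t)`. -/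
noncomputable def d3 (P : Measure Ω) (T : Ω → 𝕋) (X : Ω → 𝒳)
    (e m : 𝕋 → 𝒳 → ℝ) (Ta : Finset 𝕋) (Xg : Set 𝒳) : ℝ :=
  ∑ t ∈ Ta, (etaG P T X e Ta Xg t - etaU P T X e Ta t)
      * (muG P X m Xg t - muAll P X m t)

/-- `d₄(a,g) = Σ_{t∈𝒯_a} Cov(e_t(X), μ_t(X) | X∈𝒳_g) / P(T∈𝒯_a | X∈𝒳_g)`. -/
noncomputable def d4 (P : Measure Ω) (T : Ω → 𝕋) (X : Ω → 𝒳)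
    (e m : 𝕋 → 𝒳 → ℝ) (Ta : Finset 𝕋) (Xg : Set 𝒳) : ℝ :=
  (∑ t ∈ Ta, ccov P (X ⁻¹' Xg) (fun ω => e t (X ω)) fun ω => m t (X ω))
    / ((P (T ⁻¹' (Ta : Set 𝕋) ∩ X ⁻¹' Xg)).toReal / (P (X ⁻¹' Xg)).toReal)

/-- `d₄'(a,g) = Σ_{t∈𝒯_a} Cov(e_{ta}(X), μ_t(X) | X∈𝒳_g)`. -/
noncomputable def d4' (P : Measure Ω) (T : Ω → 𝕋) (X : Ω → 𝒳)
    (e m : 𝕋 → 𝒳 → ℝ) (Ta : Finset 𝕋) (Xg : Set 𝒳) : ℝ :=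
  ∑ t ∈ Ta, ccov P (X ⁻¹' Xg) (fun ω => eCondAgg e Ta t (X ω)) fun ω => m t (X ω)

/-- `d₅(a,g) = Σ_{t∈𝒯_a} (E[e_{ta}(X)|X∈𝒳_g] − e_{ta}(𝒳_g)) μ_t(𝒳_g)`. -/
noncomputable def d5 (P : Measure Ω) (T : Ω → 𝕋) (X : Ω → 𝒳)
    (e m : 𝕋 → 𝒳 → ℝ) (Ta : Finset 𝕋) (Xg : Set 𝒳) : ℝ :=
  ∑ t ∈ Ta, (etaBarG P X e Ta Xg t - etaG P T X e Ta Xg t) * muG P X m Xg t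

/-- `Δ_j(a,a',g,g') = (d_j(a,g) − d_j(a',g)) − (d_j(a,g') − d_j(a',g'))`. -/
noncomputable def DD {𝕋 𝒳 : Type*} (dj : Finset 𝕋 → Set 𝒳 → ℝ)
    (Ta Ta' : Finset 𝕋) (Xg Xg' : Set 𝒳) : ℝ :=
  (dj Ta Xg - dj Ta' Xg) - (dj Ta Xg' - dj Ta' Xg')

/-- The effect-heterogeneity parameter
`Δ₁ = Σ_{t∈𝒯_a} Σ_{t'∈𝒯_{a'}} e_{ta} e_{t'a'} (τ_{t,t'}(𝒳_g) − τ_{t,t'}(𝒳_{g'}))`. -/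
noncomputable def Delta1 (P : Measure Ω) (T : Ω → 𝕋) (X : Ω → 𝒳)
    (e m : 𝕋 → 𝒳 → ℝ) (Ta Ta' : Finset 𝕋) (Xg Xg' : Set 𝒳) : ℝ :=
  ∑ t ∈ Ta, ∑ t' ∈ Ta',
    etaU P T X e Ta t * etaU P T X e Ta' t'
      * ((muG P X m Xg t - muG P X m Xg t')
          - (muG P X m Xg' t - muG P X m Xg' t'))

end Decomp

/-- **Under full randomization of the effective treatment** (`T` independent of `X`),
all treatment-heterogeneity decomposition parameters vanish: for any aggregations
`𝒯_a, 𝒯_{a'}` and groups `𝒳_g, 𝒳_{g'}`, the parameters `Δ₂, Δ₃, Δ₄, Δ₄'` and `Δ₅`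
are all zero, so both the group differences-in-means and the adjusted group
differences-in-means equal the effect-heterogeneity parameter
`Δ₁ = Σ_{t∈𝒯_a} Σ_{t'∈𝒯_{a'}} e_{ta} e_{t'a'} (τ_{t,t'}(𝒳_g) − τ_{t,t'}(𝒳_{g'}))`.
Here `m t` is a version of `E[Y(t)|X = ·]`, `e t` a positive version of
`P(T = t|X = ·)`, and `wA`, `wA'` are versions of the adjusted regressions
`E[Y|T∈𝒯_a, X = ·]`, `E[Y|T∈𝒯_{a'}, X = ·]`. -/
theorem statement11
    {Ω 𝕋 𝒳 : Type*} [MeasurableSpace Ω] [Fintype 𝕋] [MeasurableSpace 𝕋]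
    [MeasurableSingletonClass 𝕋] [MeasurableSpace 𝒳]
    (P : Measure Ω) [IsProbabilityMeasure P]
    (Y : 𝕋 → Ω → ℝ) (T : Ω → 𝕋) (X : Ω → 𝒳)
    (hT : Measurable T) (hX : Measurable X)
    -- full randomization of the effective treatment
    (hrand : ProbabilityTheory.IndepFun T X P)
    (hYmeas : ∀ t, Measurable (Y t))
    (hYint : ∀ t, Integrable (Y t) P)
    (hYsq : ∀ t, Integrable (fun ω => Y t ω ^ 2) P)
    (m : 𝕋 → 𝒳 → ℝ) (hmmeas : ∀ t, Measurable (m t))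
    (hmint : ∀ t, Integrable (fun ω => m t (X ω)) P)
    (hm : ∀ t, ∀ B : Set 𝒳, MeasurableSet B →
      ∫ ω in X ⁻¹' B, Y t ω ∂P = ∫ ω in X ⁻¹' B, m t (X ω) ∂P)
    (e : 𝕋 → 𝒳 → ℝ) (hemeas : ∀ t, Measurable (e t))
    (he : ∀ t, ∀ B : Set 𝒳, MeasurableSet B →
      (P (X ⁻¹' B ∩ T ⁻¹' {t})).toReal = ∫ ω in X ⁻¹' B, e t (X ω) ∂P)
    (hepos : ∀ t x, 0 < e t x)
    -- unconfoundedness (here implied by randomization), in conditional-mean form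
    (hUC : ∀ t s, ∀ B : Set 𝒳, MeasurableSet B →
      ∫ ω in X ⁻¹' B ∩ T ⁻¹' {s}, Y t ω ∂P
        = ∫ ω in X ⁻¹' B, m t (X ω) * e s (X ω) ∂P)
    (Ta Ta' : Finset 𝕋) (Xg Xg' : Set 𝒳)
    (hXg : MeasurableSet Xg) (hXg' : MeasurableSet Xg')
    -- adjusted regressions `E[Y|T∈𝒯_a, X = ·]` and `E[Y|T∈𝒯_{a'}, X = ·]`
    (wA wA' : 𝒳 → ℝ) (hwAmeas : Measurable wA) (hwA'meas : Measurable wA')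
    (hwAint : Integrable (fun ω => wA (X ω)) P)
    (hwA'int : Integrable (fun ω => wA' (X ω)) P)
    (hwA : ∀ B : Set 𝒳, MeasurableSet B →
      ∫ ω in X ⁻¹' B ∩ T ⁻¹' (Ta : Set 𝕋), Y (T ω) ω ∂P
        = ∫ ω in X ⁻¹' B, wA (X ω) * ∑ s ∈ Ta, e s (X ω) ∂P)
    (hwA' : ∀ B : Set 𝒳, MeasurableSet B →
      ∫ ω in X ⁻¹' B ∩ T ⁻¹' (Ta' : Set 𝕋), Y (T ω) ω ∂P
        = ∫ ω in X ⁻¹' B, wA' (X ω) * ∑ s ∈ Ta', e s (X ω) ∂P)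
    (hPTa : 0 < (P (T ⁻¹' (Ta : Set 𝕋))).toReal)
    (hPTa' : 0 < (P (T ⁻¹' (Ta' : Set 𝕋))).toReal)
    (hPXg : 0 < (P (X ⁻¹' Xg)).toReal)
    (hPXg' : 0 < (P (X ⁻¹' Xg')).toReal)
    (hP1 : 0 < (P (T ⁻¹' (Ta : Set 𝕋) ∩ X ⁻¹' Xg)).toReal)
    (hP2 : 0 < (P (T ⁻¹' (Ta' : Set 𝕋) ∩ X ⁻¹' Xg)).toReal)
    (hP3 : 0 < (P (T ⁻¹' (Ta : Set 𝕋) ∩ X ⁻¹' Xg')).toReal)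
    (hP4 : 0 < (P (T ⁻¹' (Ta' : Set 𝕋) ∩ X ⁻¹' Xg')).toReal) :
    (Decomp.DD (Decomp.d2 P T X e m) Ta Ta' Xg Xg' = 0 ∧
     Decomp.DD (Decomp.d3 P T X e m) Ta Ta' Xg Xg' = 0 ∧
     Decomp.DD (Decomp.d4 P T X e m) Ta Ta' Xg Xg' = 0 ∧
     Decomp.DD (Decomp.d4' P T X e m) Ta Ta' Xg Xg' = 0 ∧
     Decomp.DD (Decomp.d5 P T X e m) Ta Ta' Xg Xg' = 0) ∧
    -- the group differences-in-means equals Δ₁ …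
    ((cexp P (T ⁻¹' (Ta : Set 𝕋) ∩ X ⁻¹' Xg) (fun ω => Y (T ω) ω)
        - cexp P (T ⁻¹' (Ta' : Set 𝕋) ∩ X ⁻¹' Xg) (fun ω => Y (T ω) ω))
      - (cexp P (T ⁻¹' (Ta : Set 𝕋) ∩ X ⁻¹' Xg') (fun ω => Y (T ω) ω)
        - cexp P (T ⁻¹' (Ta' : Set 𝕋) ∩ X ⁻¹' Xg') (fun ω => Y (T ω) ω))
      = Decomp.Delta1 P T X e m Ta Ta' Xg Xg') ∧
    -- … and so does the adjusted group differences-in-means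
    ((cexp P (X ⁻¹' Xg) (fun ω => wA (X ω))
        - cexp P (X ⁻¹' Xg) (fun ω => wA' (X ω)))
      - (cexp P (X ⁻¹' Xg') (fun ω => wA (X ω))
        - cexp P (X ⁻¹' Xg') (fun ω => wA' (X ω)))
      = Decomp.Delta1 P T X e m Ta Ta' Xg Xg') := by

  classical
  set p : 𝕋 → ℝ := fun t => (P (T ⁻¹' {t})).toReal with hp_def
  have hXaem : AEMeasurable X P := hX.aemeasurable
  have hprob : IsProbabilityMeasure (P.map X) := Measure.isProbabilityMeasure_map hXaem
  have hae : ∀ t, (fun ω => e t (X ω)) =ᵐ[P] fun _ => p t := by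
    intro t
    have hsets : ∀ B : Set 𝒳, MeasurableSet B →
        ∫ x in B, e t x ∂(P.map X) = ((P.map X) B).toReal * p t := by
      intro B hB
      rw [setIntegral_map hB (hemeas t).aestronglyMeasurable hXaem, ← he t B hB,
        Measure.map_apply hX hB]
      have h2 := hrand.measure_inter_preimage_eq_mul {t} B (measurableSet_singleton t) hB
      rw [Set.inter_comm, h2, ENNReal.toReal_mul, mul_comm]
    have h := ae_const_of_setIntegral (P.map X) (e t) (hemeas t) (hepos t) (p t) hsets
    exact ae_eq_comp hXaem h
  have haeAll : ∀ᵐ ω ∂P, ∀ t, e t (X ω) = p t := ae_all_iff.mpr hae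
  have hTameas : ∀ (Ts : Finset 𝕋), MeasurableSet ((Ts : Set 𝕋)) := fun Ts =>
    Ts.finite_toSet.measurableSet
  have hSval : ∀ Ts : Finset 𝕋, (P (T ⁻¹' (Ts : Set 𝕋))).toReal = ∑ t ∈ Ts, p t := by
    intro Ts
    have hdec : T ⁻¹' (Ts : Set 𝕋) = ⋃ t ∈ Ts, T ⁻¹' {t} := by ext ω; simp
    rw [hdec, measure_biUnion_finset
      (fun i _ j _ hij => Disjoint.preimage T (Set.disjoint_singleton.mpr hij))
      (fun t _ => hT (measurableSet_singleton t)),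
      ENNReal.toReal_sum (fun t _ => measure_ne_top P _)]
  have hSA : 0 < ∑ t ∈ Ta, p t := by rw [← hSval]; exact hPTa
  have hSA' : 0 < ∑ t ∈ Ta', p t := by rw [← hSval]; exact hPTa'
  have haeAgg : ∀ (Ts : Finset 𝕋) (t : 𝕋),
      (fun ω => eCondAgg e Ts t (X ω)) =ᵐ[P] fun _ => p t / ∑ s ∈ Ts, p s := by
    intro Ts t
    filter_upwards [haeAll] with ω hω
    unfold eCondAgg
    rw [hω t, Finset.sum_congr rfl fun s _ => hω s]
  have hetaU : ∀ (Ts : Finset 𝕋), 0 < (P (T ⁻¹' (Ts : Set 𝕋))).toReal → ∀ t,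
      Decomp.etaU P T X e Ts t = p t / ∑ s ∈ Ts, p s := by
    intro Ts hTs t
    unfold Decomp.etaU
    rw [cexp_congr (haeAgg Ts t), cexp_const hTs.ne']
  have hetaG : ∀ (Ts : Finset 𝕋) (G : Set 𝒳),
      0 < (P (X ⁻¹' G ∩ T ⁻¹' (Ts : Set 𝕋))).toReal → ∀ t,
      Decomp.etaG P T X e Ts G t = p t / ∑ s ∈ Ts, p s := by
    intro Ts G hTG t
    unfold Decomp.etaG
    rw [cexp_congr (haeAgg Ts t), cexp_const hTG.ne']
  have hetaBarG : ∀ (Ts : Finset 𝕋) (G : Set 𝒳), 0 < (P (X ⁻¹' G)).toReal → ∀ t,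
      Decomp.etaBarG P X e Ts G t = p t / ∑ s ∈ Ts, p s := by
    intro Ts G hG t
    unfold Decomp.etaBarG
    rw [cexp_congr (haeAgg Ts t), cexp_const hG.ne']
  -- all d-parameters vanish
  have hdzero : ∀ (Ts : Finset 𝕋) (G : Set 𝒳),
      0 < (P (T ⁻¹' (Ts : Set 𝕋))).toReal → 0 < (P (X ⁻¹' G)).toReal →
      0 < (P (T ⁻¹' (Ts : Set 𝕋) ∩ X ⁻¹' G)).toReal →
      Decomp.d2 P T X e m Ts G = 0 ∧ Decomp.d3 P T X e m Ts G = 0 ∧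
      Decomp.d4 P T X e m Ts G = 0 ∧ Decomp.d4' P T X e m Ts G = 0 ∧
      Decomp.d5 P T X e m Ts G = 0 := by
    intro Ts G hTs hG hTG
    have hTG' : 0 < (P (X ⁻¹' G ∩ T ⁻¹' (Ts : Set 𝕋))).toReal := by
      rwa [Set.inter_comm]
    refine ⟨?_, ?_, ?_, ?_, ?_⟩
    · exact Finset.sum_eq_zero fun t ht => by
        rw [hetaG Ts G hTG' t, hetaU Ts hTs t, sub_self, zero_mul]
    · exact Finset.sum_eq_zero fun t ht => by
        rw [hetaG Ts G hTG' t, hetaU Ts hTs t, sub_self, zero_mul]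
    · unfold Decomp.d4
      rw [Finset.sum_eq_zero fun t ht => ccov_zero_of_ae_const (hae t) hG.ne' _, zero_div]
    · exact Finset.sum_eq_zero fun t ht => ccov_zero_of_ae_const (haeAgg Ts t) hG.ne' _
    · exact Finset.sum_eq_zero fun t ht => by
        rw [hetaBarG Ts G hG t, hetaG Ts G hTG' t, sub_self, zero_mul]
  obtain ⟨h2a, h3a, h4a, h4'a, h5a⟩ := hdzero Ta Xg hPTa hPXg hP1
  obtain ⟨h2b, h3b, h4b, h4'b, h5b⟩ := hdzero Ta' Xg hPTa' hPXg hP2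
  obtain ⟨h2c, h3c, h4c, h4'c, h5c⟩ := hdzero Ta Xg' hPTa hPXg' hP3
  obtain ⟨h2d, h3d, h4d, h4'd, h5d⟩ := hdzero Ta' Xg' hPTa' hPXg' hP4
  -- numerator decomposition
  have hnum : ∀ (G : Set 𝒳), MeasurableSet G → ∀ (Ts : Finset 𝕋),
      ∫ ω in X ⁻¹' G ∩ T ⁻¹' (Ts : Set 𝕋), Y (T ω) ω ∂P
        = ∑ t ∈ Ts, p t * ∫ ω in X ⁻¹' G, m t (X ω) ∂P := by
    intro G hG Ts
    have hdec : X ⁻¹' G ∩ T ⁻¹' (Ts : Set 𝕋) = ⋃ t ∈ Ts, (X ⁻¹' G ∩ T ⁻¹' {t}) := by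
      ext ω; simp
    have hmeasp : ∀ t ∈ Ts, MeasurableSet (X ⁻¹' G ∩ T ⁻¹' {t}) :=
      fun t _ => (hX hG).inter (hT (measurableSet_singleton t))
    have hdisj : (↑Ts : Set 𝕋).Pairwise (Function.onFun Disjoint fun t => X ⁻¹' G ∩ T ⁻¹' {t}) := by
      intro i _ j _ hij
      exact Disjoint.mono Set.inter_subset_right Set.inter_subset_right
        (Disjoint.preimage T (Set.disjoint_singleton.mpr hij))
    have hIntOn : ∀ t ∈ Ts, IntegrableOn (fun ω => Y (T ω) ω) (X ⁻¹' G ∩ T ⁻¹' {t}) P := by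
      intro t ht
      refine Integrable.congr ((hYint t).integrableOn) ?_
      filter_upwards [ae_restrict_mem (hmeasp t ht)] with ω hω
      rw [show T ω = t from hω.2]
    rw [hdec, integral_biUnion_finset Ts hmeasp hdisj hIntOn]
    refine Finset.sum_congr rfl fun t ht => ?_
    have h1 : ∫ ω in X ⁻¹' G ∩ T ⁻¹' {t}, Y (T ω) ω ∂P
        = ∫ ω in X ⁻¹' G ∩ T ⁻¹' {t}, Y t ω ∂P :=
      setIntegral_congr_fun (hmeasp t ht) (fun ω hω => by
        show Y (T ω) ω = Y t ω
        rw [show T ω = t from hω.2])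
    rw [h1, hUC t t G hG]
    have h2 : (fun ω => m t (X ω) * e t (X ω)) =ᵐ[P] fun ω => p t * m t (X ω) := by
      filter_upwards [hae t] with ω hω
      rw [hω]; ring
    rw [integral_congr_ae (ae_restrict_of_ae h2), MeasureTheory.integral_const_mul]
  -- group means formula
  have hgroup : ∀ (Ts : Finset 𝕋) (G : Set 𝒳), MeasurableSet G →
      0 < (P (X ⁻¹' G)).toReal →
      cexp P (T ⁻¹' (Ts : Set 𝕋) ∩ X ⁻¹' G) (fun ω => Y (T ω) ω)
        = ∑ t ∈ Ts, (p t / ∑ s ∈ Ts, p s) * Decomp.muG P X m G t := by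
    intro Ts G hG hPG
    unfold cexp
    rw [Set.inter_comm (T ⁻¹' (Ts : Set 𝕋)) (X ⁻¹' G), hnum G hG Ts]
    have hden : (P (X ⁻¹' G ∩ T ⁻¹' (Ts : Set 𝕋))).toReal
        = (∑ s ∈ Ts, p s) * (P (X ⁻¹' G)).toReal := by
      rw [Set.inter_comm, hrand.measure_inter_preimage_eq_mul _ _ (hTameas Ts) hG,
        ENNReal.toReal_mul, hSval Ts]
    rw [hden]
    unfold Decomp.muG cexp
    rw [Finset.sum_div]
    exact Finset.sum_congr rfl fun t ht => (div_mul_div_comm _ _ _ _).symm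
  -- adjusted means formula
  have hadj : ∀ (Ts : Finset 𝕋) (w : 𝒳 → ℝ),
      (∀ B : Set 𝒳, MeasurableSet B →
        ∫ ω in X ⁻¹' B ∩ T ⁻¹' (Ts : Set 𝕋), Y (T ω) ω ∂P
          = ∫ ω in X ⁻¹' B, w (X ω) * ∑ s ∈ Ts, e s (X ω) ∂P) →
      ∀ (G : Set 𝒳), MeasurableSet G → 0 < (P (X ⁻¹' G)).toReal →
      0 < (∑ s ∈ Ts, p s) →
      cexp P (X ⁻¹' G) (fun ω => w (X ω))
        = ∑ t ∈ Ts, (p t / ∑ s ∈ Ts, p s) * Decomp.muG P X m G t := by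
    intro Ts w hw G hG hPG hS
    have h1 : (fun ω => w (X ω) * ∑ s ∈ Ts, e s (X ω))
        =ᵐ[P] fun ω => (∑ s ∈ Ts, p s) * w (X ω) := by
      filter_upwards [haeAll] with ω hω
      rw [Finset.sum_congr rfl fun s _ => hω s]; ring
    have h3 := hw G hG
    rw [hnum G hG Ts, integral_congr_ae (ae_restrict_of_ae h1),
      MeasureTheory.integral_const_mul] at h3
    have hw' : ∫ ω in X ⁻¹' G, w (X ω) ∂P
        = (∑ t ∈ Ts, p t * ∫ ω in X ⁻¹' G, m t (X ω) ∂P) / (∑ s ∈ Ts, p s) := by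
      rw [eq_div_iff hS.ne']
      linarith [h3]
    unfold cexp Decomp.muG cexp
    rw [hw', div_div, Finset.sum_div]
    exact Finset.sum_congr rfl fun t ht => by rw [← div_mul_div_comm]
  -- Delta1 value
  have hA1 : ∑ t ∈ Ta, p t / (∑ s ∈ Ta, p s) = 1 := by
    rw [← Finset.sum_div, div_self hSA.ne']
  have hB1 : ∑ t ∈ Ta', p t / (∑ s ∈ Ta', p s) = 1 := by
    rw [← Finset.sum_div, div_self hSA'.ne']
  have hDelta1 : Decomp.Delta1 P T X e m Ta Ta' Xg Xg'
      = ((∑ t ∈ Ta, (p t / ∑ s ∈ Ta, p s) * Decomp.muG P X m Xg t)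
          - ∑ t' ∈ Ta', (p t' / ∑ s ∈ Ta', p s) * Decomp.muG P X m Xg t')
        - ((∑ t ∈ Ta, (p t / ∑ s ∈ Ta, p s) * Decomp.muG P X m Xg' t)
          - ∑ t' ∈ Ta', (p t' / ∑ s ∈ Ta', p s) * Decomp.muG P X m Xg' t') := by
    unfold Decomp.Delta1
    rw [Finset.sum_congr rfl fun t ht => Finset.sum_congr rfl fun t' ht' => by
      rw [hetaU Ta hPTa t, hetaU Ta' hPTa' t']]
    exact sum_algebra Ta Ta' (fun t => p t / ∑ s ∈ Ta, p s)
      (fun t => p t / ∑ s ∈ Ta', p s) (Decomp.muG P X m Xg) (Decomp.muG P X m Xg') hA1 hB1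
  refine ⟨⟨?_, ?_, ?_, ?_, ?_⟩, ?_, ?_⟩
  · unfold Decomp.DD; rw [h2a, h2b, h2c, h2d]; ring
  · unfold Decomp.DD; rw [h3a, h3b, h3c, h3d]; ring
  · unfold Decomp.DD; rw [h4a, h4b, h4c, h4d]; ring
  · unfold Decomp.DD; rw [h4'a, h4'b, h4'c, h4'd]; ring
  · unfold Decomp.DD; rw [h5a, h5b, h5c, h5d]; ring
  · rw [hgroup Ta Xg hXg hPXg, hgroup Ta' Xg hXg hPXg,
      hgroup Ta Xg' hXg' hPXg', hgroup Ta' Xg' hXg' hPXg', hDelta1]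
  · rw [hadj Ta wA hwA Xg hXg hPXg hSA, hadj Ta' wA' hwA' Xg hXg hPXg hSA',
      hadj Ta wA hwA Xg' hXg' hPXg' hSA, hadj Ta' wA' hwA' Xg' hXg' hPXg' hSA', hDelta1]
end

section
/- Decomposition of the group differences-in-means: under unconfoundedness, (E[Y|T∈𝒯_a, X∈𝒳_g] − E[Y|T∈𝒯_{a'}, X∈𝒳_g]) − (E[Y|T∈𝒯_a, X∈𝒳_{g'}] − E[Y|T∈𝒯_{a'}, X∈𝒳_{g'}]) = Δ_1(a,a',g,g') + Δ_2(a,a',g,g') + Δ_3(a,a',g,g') + Δ_4(a,a',g,g'). -/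
open MeasureTheory

section Helpers

variable {Ω 𝕋 𝒳 : Type*} [MeasurableSpace Ω] [MeasurableSpace 𝕋]
  [MeasurableSingletonClass 𝕋] [MeasurableSpace 𝒳]
  (P : Measure Ω) [IsProbabilityMeasure P] {T : Ω → 𝕋} {X : Ω → 𝒳}

lemma eInt (hX : Measurable X) (s : 𝕋) (es : 𝒳 → ℝ) (hes : Measurable es)
    (hnn : ∀ x, 0 ≤ es x)
    (he : ∀ B : Set 𝒳, MeasurableSet B →
      (P (X ⁻¹' B ∩ T ⁻¹' {s})).toReal = ∫ ω in X ⁻¹' B, es (X ω) ∂P) :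
    Integrable (fun ω => es (X ω)) P := by
  have hmeas : Measurable fun ω => es (X ω) := hes.comp hX
  have hBm : ∀ n : ℕ, MeasurableSet {x | es x ≤ (n : ℝ)} :=
    fun n => measurableSet_le hes measurable_const
  set C : ℕ → Set Ω := fun n => X ⁻¹' {x | es x ≤ (n : ℝ)} with hC
  have hCm : ∀ n, MeasurableSet (C n) := fun n => hX (hBm n)
  have hIntOn : ∀ n, IntegrableOn (fun ω => es (X ω)) (C n) P := by
    intro n
    refine Integrable.mono' (integrable_const (n : ℝ)) hmeas.aestronglyMeasurable ?_
    filter_upwards [ae_restrict_mem (hCm n)] with ω hω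
    rw [Real.norm_of_nonneg (hnn _)]
    exact hω
  have hbound : ∀ n, ∫⁻ ω in C n, ENNReal.ofReal (es (X ω)) ∂P ≤ 1 := by
    intro n
    rw [← ofReal_integral_eq_lintegral_ofReal (hIntOn n)
      (Filter.Eventually.of_forall fun ω => hnn _), ← he _ (hBm n)]
    exact ENNReal.ofReal_le_one.mpr
      ((ENNReal.toReal_mono ENNReal.one_ne_top prob_le_one).trans_eq ENNReal.toReal_one)
  have hUnion : ⋃ n, C n = Set.univ := by
    ext ω
    simp only [Set.mem_iUnion, Set.mem_univ, iff_true, hC, Set.mem_preimage, Set.mem_setOf_eq]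
    exact exists_nat_ge (es (X ω))
  have hmono : Monotone C := by
    intro a b hab
    refine Set.preimage_mono fun x hx => ?_
    simp only [Set.mem_setOf_eq] at hx ⊢
    exact le_trans hx (Nat.cast_le.mpr hab)
  have hfin : ∫⁻ ω, ENNReal.ofReal (es (X ω)) ∂P ≤ 1 := by
    have h1 : (P.withDensity fun ω => ENNReal.ofReal (es (X ω))) Set.univ ≤ 1 := by
      rw [← hUnion, hmono.directed_le.measure_iUnion]
      exact iSup_le fun n => by rw [withDensity_apply _ (hCm n)]; exact hbound n
    rwa [withDensity_apply _ MeasurableSet.univ, Measure.restrict_univ] at h1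
  refine ⟨hmeas.aestronglyMeasurable, ?_⟩
  rw [hasFiniteIntegral_iff_ofReal (Filter.Eventually.of_forall fun ω => hnn _)]
  exact lt_of_le_of_lt hfin ENNReal.one_lt_top


lemma transfer (hT : Measurable T) (hX : Measurable X) (s : 𝕋)
    (es : 𝒳 → ℝ) (hes : Measurable es) (hnn : ∀ x, 0 ≤ es x)
    (he : ∀ B : Set 𝒳, MeasurableSet B →
      (P (X ⁻¹' B ∩ T ⁻¹' {s})).toReal = ∫ ω in X ⁻¹' B, es (X ω) ∂P)
    (f : 𝒳 → ℝ) (hf : Measurable f) :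
    ∫ ω in T ⁻¹' {s}, f (X ω) ∂P = ∫ ω, f (X ω) * es (X ω) ∂P := by
  have heI : Integrable (fun ω => es (X ω)) P := eInt P hX s es hes hnn he
  have hmapeq : (P.restrict (T ⁻¹' {s})).map X
      = (P.map X).withDensity fun x => ENNReal.ofReal (es x) := by
    ext B hB
    rw [Measure.map_apply hX hB, Measure.restrict_apply (hX hB),
      withDensity_apply _ hB,
      setLIntegral_map hB hes.ennreal_ofReal hX,
      ← ofReal_integral_eq_lintegral_ofReal heI.integrableOn
        (Filter.Eventually.of_forall fun ω => hnn _),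
      ← he B hB, ENNReal.ofReal_toReal (measure_ne_top _ _)]
  have h1 : ∫ ω in T ⁻¹' {s}, f (X ω) ∂P
      = ∫ x, f x ∂((P.restrict (T ⁻¹' {s})).map X) :=
    (integral_map hX.aemeasurable hf.aestronglyMeasurable).symm
  rw [h1, hmapeq]
  have h2 : ((P.map X).withDensity fun x => ENNReal.ofReal (es x))
      = (P.map X).withDensity fun x => ((es x).toNNReal : ENNReal) := rfl
  rw [h2, integral_withDensity_eq_integral_smul hes.real_toNNReal f]
  have h3 : (fun x => (es x).toNNReal • f x) = fun x => f x * es x := by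
    funext x
    simp [NNReal.smul_def, Real.coe_toNNReal _ (hnn x), mul_comm]
  rw [h3, integral_map (f := fun x => f x * es x) hX.aemeasurable ((hf.mul hes).aestronglyMeasurable)]

lemma transfer_set (hT : Measurable T) (hX : Measurable X) (s : 𝕋)
    (es : 𝒳 → ℝ) (hes : Measurable es) (hnn : ∀ x, 0 ≤ es x)
    (he : ∀ B : Set 𝒳, MeasurableSet B →
      (P (X ⁻¹' B ∩ T ⁻¹' {s})).toReal = ∫ ω in X ⁻¹' B, es (X ω) ∂P)
    (B : Set 𝒳) (hB : MeasurableSet B) (f : 𝒳 → ℝ) (hf : Measurable f) :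
    ∫ ω in X ⁻¹' B ∩ T ⁻¹' {s}, f (X ω) ∂P
      = ∫ ω in X ⁻¹' B, f (X ω) * es (X ω) ∂P := by
  have h1 : ∫ ω in X ⁻¹' B ∩ T ⁻¹' {s}, f (X ω) ∂P
      = ∫ ω in T ⁻¹' {s}, (B.indicator f) (X ω) ∂P := by
    rw [← Measure.restrict_restrict (hX hB), ← integral_indicator (hX hB)]
    refine integral_congr_ae (Filter.Eventually.of_forall fun ω => ?_)
    by_cases h : X ω ∈ B <;> simp [Set.indicator, h]
  rw [h1, transfer P hT hX s es hes hnn he _ (hf.indicator hB),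
    ← integral_indicator (hX hB)]
  refine integral_congr_ae (Filter.Eventually.of_forall fun ω => ?_)
  by_cases h : X ω ∈ B <;> simp [Set.indicator, h]

lemma split_biUnion (hT : Measurable T) (A : Finset 𝕋) (S : Set Ω) (hS : MeasurableSet S)
    (g : Ω → ℝ) (hg : ∀ t ∈ A, IntegrableOn g (S ∩ T ⁻¹' {t}) P) :
    ∫ ω in S ∩ T ⁻¹' (A : Set 𝕋), g ω ∂P = ∑ t ∈ A, ∫ ω in S ∩ T ⁻¹' {t}, g ω ∂P := by
  have hU : S ∩ T ⁻¹' (A : Set 𝕋) = ⋃ t ∈ A, S ∩ T ⁻¹' {t} := by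
    ext ω
    simp only [Set.mem_inter_iff, Set.mem_preimage, Finset.mem_coe, Set.mem_iUnion,
      Set.mem_singleton_iff]
    constructor
    · rintro ⟨h1, h2⟩; exact ⟨T ω, h2, h1, rfl⟩
    · rintro ⟨t, ht, h1, h2⟩; exact ⟨h1, h2 ▸ ht⟩
  rw [hU]
  refine integral_biUnion_finset A (fun t _ => hS.inter (hT (measurableSet_singleton t)))
    ?_ hg
  intro a _ b _ hab
  simp only [Function.onFun]
  refine Set.disjoint_left.mpr fun ω h1 h2 => hab ?_
  have ha : T ω = a := h1.2
  have hb : T ω = b := h2.2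
  rw [← ha, ← hb]


lemma key (hT : Measurable T) (hX : Measurable X)
    (Y : 𝕋 → Ω → ℝ) (hYint : ∀ t, Integrable (Y t) P)
    (m : 𝕋 → 𝒳 → ℝ) (hmmeas : ∀ t, Measurable (m t))
    (e : 𝕋 → 𝒳 → ℝ) (hemeas : ∀ t, Measurable (e t))
    (he : ∀ t, ∀ B : Set 𝒳, MeasurableSet B →
      (P (X ⁻¹' B ∩ T ⁻¹' {t})).toReal = ∫ ω in X ⁻¹' B, e t (X ω) ∂P)
    (hepos : ∀ t x, 0 < e t x)
    (hUC : ∀ t s, ∀ B : Set 𝒳, MeasurableSet B →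
      ∫ ω in X ⁻¹' B ∩ T ⁻¹' {s}, Y t ω ∂P
        = ∫ ω in X ⁻¹' B, m t (X ω) * e s (X ω) ∂P)
    (A : Finset 𝕋) (B : Set 𝒳) (hB : MeasurableSet B)
    (hq : 0 < (P (T ⁻¹' (A : Set 𝕋) ∩ X ⁻¹' B)).toReal)
    (hp : 0 < (P (X ⁻¹' B)).toReal)
    (hqU : 0 < (P (T ⁻¹' (A : Set 𝕋))).toReal) :
    cexp P (T ⁻¹' (A : Set 𝕋) ∩ X ⁻¹' B) (fun ω => Y (T ω) ω)
      = Decomp.d1 P T X e m A B + Decomp.d2 P T X e m A B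
        + Decomp.d3 P T X e m A B + Decomp.d4 P T X e m A B
        + ∑ t ∈ A, Decomp.etaU P T X e A t * Decomp.muAll P X m t := by
  have hAne : A.Nonempty := by
    rcases A.eq_empty_or_nonempty with h | h
    · subst h; simp [Finset.coe_empty] at hq
    · exact h
  have hS : ∀ x, 0 < ∑ s ∈ A, e s x := fun x => Finset.sum_pos (fun s _ => hepos s x) hAne
  have heI : ∀ s : 𝕋, Integrable (fun ω => e s (X ω)) P :=
    fun s => eInt P hX s (e s) (hemeas s) (fun x => (hepos s x).le) (he s)
  have hecmeas : ∀ t, Measurable fun x => eCondAgg e A t x := fun t =>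
    (hemeas t).div (Finset.measurable_sum A fun s _ => hemeas s)
  have hecbd : ∀ t ∈ A, ∀ x, ‖eCondAgg e A t x‖ ≤ 1 := by
    intro t ht x
    simp only [eCondAgg]
    rw [Real.norm_of_nonneg (div_nonneg (hepos t x).le (hS x).le)]
    exact (div_le_one (hS x)).mpr (Finset.single_le_sum (fun s _ => (hepos s x).le) ht)
  have hetaNum : ∀ (b : Set 𝒳), MeasurableSet b → ∀ t ∈ A,
      ∫ ω in X ⁻¹' b ∩ T ⁻¹' (A : Set 𝕋), eCondAgg e A t (X ω) ∂P
        = ∫ ω in X ⁻¹' b, e t (X ω) ∂P := by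
    intro b hb t ht
    rw [split_biUnion P hT A (X ⁻¹' b) (hX hb) _ ?hint]
    case hint =>
      intro s _
      refine Integrable.mono' (integrable_const 1)
        ((hecmeas t).comp hX).aestronglyMeasurable ?_
      exact Filter.Eventually.of_forall fun ω => hecbd t ht _
    have hstep : ∀ s ∈ A, ∫ ω in X ⁻¹' b ∩ T ⁻¹' {s}, eCondAgg e A t (X ω) ∂P
        = ∫ ω in X ⁻¹' b, eCondAgg e A t (X ω) * e s (X ω) ∂P := fun s _ =>
      transfer_set P hT hX s (e s) (hemeas s) (fun x => (hepos s x).le) (he s) b hb _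
        (hecmeas t)
    rw [Finset.sum_congr rfl hstep, ← integral_finset_sum A ?hint2]
    case hint2 =>
      intro s _
      exact ((heI s).restrict).bdd_mul ((hecmeas t).comp hX).aestronglyMeasurable
        (Filter.Eventually.of_forall fun ω => hecbd t ht _)
    refine setIntegral_congr_fun (hX hb) fun ω _ => ?_
    rw [← Finset.mul_sum]
    exact div_mul_cancel₀ _ (ne_of_gt (hS _))
  have hp0 : (P (X ⁻¹' B)).toReal ≠ 0 := ne_of_gt hp
  have hq0 : (P (T ⁻¹' (A : Set 𝕋) ∩ X ⁻¹' B)).toReal ≠ 0 := ne_of_gt hq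
  have hqU0 : (P (T ⁻¹' (A : Set 𝕋))).toReal ≠ 0 := ne_of_gt hqU
  have hetaG : ∀ t ∈ A, Decomp.etaG P T X e A B t
      = (∫ ω in X ⁻¹' B, e t (X ω) ∂P) / (P (T ⁻¹' (A : Set 𝕋) ∩ X ⁻¹' B)).toReal := by
    intro t ht
    rw [Decomp.etaG, cexp, hetaNum B hB t ht, Set.inter_comm]
  have hetaU : ∀ t ∈ A, Decomp.etaU P T X e A t
      = (∫ ω, e t (X ω) ∂P) / (P (T ⁻¹' (A : Set 𝕋))).toReal := by
    intro t ht
    rw [Decomp.etaU, cexp]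
    congr 1
    have h0 : (T ⁻¹' (A : Set 𝕋) : Set Ω) = X ⁻¹' Set.univ ∩ T ⁻¹' (A : Set 𝕋) := by
      simp
    rw [h0, hetaNum Set.univ MeasurableSet.univ t ht]
    simp
  have hnum : ∫ ω in T ⁻¹' (A : Set 𝕋) ∩ X ⁻¹' B, Y (T ω) ω ∂P
      = ∑ t ∈ A, ∫ ω in X ⁻¹' B, e t (X ω) * m t (X ω) ∂P := by
    rw [Set.inter_comm, split_biUnion P hT A (X ⁻¹' B) (hX hB) _ ?hint]
    case hint =>
      intro t _
      refine ((hYint t).integrableOn).congr_fun ?_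
        ((hX hB).inter (hT (measurableSet_singleton t)))
      intro ω hω
      have h : T ω = t := hω.2
      show Y t ω = Y (T ω) ω
      rw [h]
    refine Finset.sum_congr rfl fun t ht => ?_
    have heq : ∫ ω in X ⁻¹' B ∩ T ⁻¹' {t}, Y (T ω) ω ∂P
        = ∫ ω in X ⁻¹' B ∩ T ⁻¹' {t}, Y t ω ∂P := by
      refine setIntegral_congr_fun ((hX hB).inter (hT (measurableSet_singleton t)))
        fun ω hω => ?_
      have h : T ω = t := hω.2
      show Y (T ω) ω = Y t ω
      rw [h]
    rw [heq, hUC t t B hB]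
    exact integral_congr_ae (Filter.Eventually.of_forall fun ω => mul_comm _ _)
  -- unfold everything
  have hd1 : ∑ t ∈ A, Decomp.etaU P T X e A t
        * (Decomp.muG P X m B t - Decomp.muAll P X m t)
      = ∑ t ∈ A, (∫ ω, e t (X ω) ∂P) / (P (T ⁻¹' (A : Set 𝕋))).toReal
        * (Decomp.muG P X m B t - Decomp.muAll P X m t) :=
    Finset.sum_congr rfl fun t ht => by rw [hetaU t ht]
  have hd2 : ∑ t ∈ A, (Decomp.etaG P T X e A B t - Decomp.etaU P T X e A t)
        * Decomp.muAll P X m t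
      = ∑ t ∈ A, ((∫ ω in X ⁻¹' B, e t (X ω) ∂P)
            / (P (T ⁻¹' (A : Set 𝕋) ∩ X ⁻¹' B)).toReal
          - (∫ ω, e t (X ω) ∂P) / (P (T ⁻¹' (A : Set 𝕋))).toReal)
        * Decomp.muAll P X m t :=
    Finset.sum_congr rfl fun t ht => by rw [hetaG t ht, hetaU t ht]
  have hd3 : ∑ t ∈ A, (Decomp.etaG P T X e A B t - Decomp.etaU P T X e A t)
        * (Decomp.muG P X m B t - Decomp.muAll P X m t)
      = ∑ t ∈ A, ((∫ ω in X ⁻¹' B, e t (X ω) ∂P)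
            / (P (T ⁻¹' (A : Set 𝕋) ∩ X ⁻¹' B)).toReal
          - (∫ ω, e t (X ω) ∂P) / (P (T ⁻¹' (A : Set 𝕋))).toReal)
        * (Decomp.muG P X m B t - Decomp.muAll P X m t) :=
    Finset.sum_congr rfl fun t ht => by rw [hetaG t ht, hetaU t ht]
  have hd5 : ∑ t ∈ A, Decomp.etaU P T X e A t * Decomp.muAll P X m t
      = ∑ t ∈ A, (∫ ω, e t (X ω) ∂P) / (P (T ⁻¹' (A : Set 𝕋))).toReal
        * Decomp.muAll P X m t :=
    Finset.sum_congr rfl fun t ht => by rw [hetaU t ht]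
  rw [cexp, hnum]
  simp only [Decomp.d1, Decomp.d2, Decomp.d3, Decomp.d4]
  rw [hd1, hd2, hd3, hd5]
  simp only [Decomp.muG, Decomp.muAll, cexp, ccov, Finset.sum_div]
  rw [← Finset.sum_add_distrib, ← Finset.sum_add_distrib, ← Finset.sum_add_distrib,
    ← Finset.sum_add_distrib]
  refine Finset.sum_congr rfl fun t ht => ?_
  have hqp0 : (P (T ⁻¹' (A : Set 𝕋) ∩ X ⁻¹' B)).toReal / (P (X ⁻¹' B)).toReal ≠ 0 :=
    div_ne_zero hq0 hp0
  field_simp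
  ring

end Helpers


/-- **Decomposition of the group differences-in-means.** Under unconfoundedness,
`(E[Y|T∈𝒯_a, X∈𝒳_g] − E[Y|T∈𝒯_{a'}, X∈𝒳_g])
  − (E[Y|T∈𝒯_a, X∈𝒳_{g'}] − E[Y|T∈𝒯_{a'}, X∈𝒳_{g'}])
  = Δ₁(a,a',g,g') + Δ₂(a,a',g,g') + Δ₃(a,a',g,g') + Δ₄(a,a',g,g')`.
Here `m t` is a version of `E[Y(t)|X = ·]`, `e t` a positive version of
`P(T = t|X = ·)`, and unconfoundedness is stated in conditional-mean form (`hUC`). -/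
theorem statement12
    {Ω 𝕋 𝒳 : Type*} [MeasurableSpace Ω] [Fintype 𝕋] [MeasurableSpace 𝕋]
    [MeasurableSingletonClass 𝕋] [MeasurableSpace 𝒳]
    (P : Measure Ω) [IsProbabilityMeasure P]
    (Y : 𝕋 → Ω → ℝ) (T : Ω → 𝕋) (X : Ω → 𝒳)
    (hT : Measurable T) (hX : Measurable X)
    (hYmeas : ∀ t, Measurable (Y t))
    (hYint : ∀ t, Integrable (Y t) P)
    (hYsq : ∀ t, Integrable (fun ω => Y t ω ^ 2) P)
    (m : 𝕋 → 𝒳 → ℝ) (hmmeas : ∀ t, Measurable (m t))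
    (hmint : ∀ t, Integrable (fun ω => m t (X ω)) P)
    (hm : ∀ t, ∀ B : Set 𝒳, MeasurableSet B →
      ∫ ω in X ⁻¹' B, Y t ω ∂P = ∫ ω in X ⁻¹' B, m t (X ω) ∂P)
    (e : 𝕋 → 𝒳 → ℝ) (hemeas : ∀ t, Measurable (e t))
    (he : ∀ t, ∀ B : Set 𝒳, MeasurableSet B →
      (P (X ⁻¹' B ∩ T ⁻¹' {t})).toReal = ∫ ω in X ⁻¹' B, e t (X ω) ∂P)
    (hepos : ∀ t x, 0 < e t x)
    (hUC : ∀ t s, ∀ B : Set 𝒳, MeasurableSet B →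
      ∫ ω in X ⁻¹' B ∩ T ⁻¹' {s}, Y t ω ∂P
        = ∫ ω in X ⁻¹' B, m t (X ω) * e s (X ω) ∂P)
    -- disjoint treatment aggregations and disjoint heterogeneity groups
    (Ta Ta' : Finset 𝕋) (hTdisj : Disjoint Ta Ta')
    (Xg Xg' : Set 𝒳) (hXg : MeasurableSet Xg) (hXg' : MeasurableSet Xg')
    (hXdisj : Disjoint Xg Xg')
    (hPTa : 0 < (P (T ⁻¹' (Ta : Set 𝕋))).toReal)
    (hPTa' : 0 < (P (T ⁻¹' (Ta' : Set 𝕋))).toReal)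
    (hPXg : 0 < (P (X ⁻¹' Xg)).toReal)
    (hPXg' : 0 < (P (X ⁻¹' Xg')).toReal)
    (hP1 : 0 < (P (T ⁻¹' (Ta : Set 𝕋) ∩ X ⁻¹' Xg)).toReal)
    (hP2 : 0 < (P (T ⁻¹' (Ta' : Set 𝕋) ∩ X ⁻¹' Xg)).toReal)
    (hP3 : 0 < (P (T ⁻¹' (Ta : Set 𝕋) ∩ X ⁻¹' Xg')).toReal)
    (hP4 : 0 < (P (T ⁻¹' (Ta' : Set 𝕋) ∩ X ⁻¹' Xg')).toReal) :
    (cexp P (T ⁻¹' (Ta : Set 𝕋) ∩ X ⁻¹' Xg) (fun ω => Y (T ω) ω)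
        - cexp P (T ⁻¹' (Ta' : Set 𝕋) ∩ X ⁻¹' Xg) (fun ω => Y (T ω) ω))
      - (cexp P (T ⁻¹' (Ta : Set 𝕋) ∩ X ⁻¹' Xg') (fun ω => Y (T ω) ω)
        - cexp P (T ⁻¹' (Ta' : Set 𝕋) ∩ X ⁻¹' Xg') (fun ω => Y (T ω) ω))
      = Decomp.DD (Decomp.d1 P T X e m) Ta Ta' Xg Xg'
        + Decomp.DD (Decomp.d2 P T X e m) Ta Ta' Xg Xg'
        + Decomp.DD (Decomp.d3 P T X e m) Ta Ta' Xg Xg'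
        + Decomp.DD (Decomp.d4 P T X e m) Ta Ta' Xg Xg' := by
  rw [key P hT hX Y hYint m hmmeas e hemeas he hepos hUC Ta Xg hXg hP1 hPXg hPTa,
    key P hT hX Y hYint m hmmeas e hemeas he hepos hUC Ta' Xg hXg hP2 hPXg hPTa',
    key P hT hX Y hYint m hmmeas e hemeas he hepos hUC Ta Xg' hXg' hP3 hPXg' hPTa,
    key P hT hX Y hYint m hmmeas e hemeas he hepos hUC Ta' Xg' hXg' hP4 hPXg' hPTa']
  simp only [Decomp.DD]
  ring
end

section
/- Decomposition of the adjusted group differences-in-means: under unconfoundedness, (E[E[Y|T∈𝒯_a,X]|X∈𝒳_g] − E[E[Y|T∈𝒯_{a'},X]|X∈𝒳_g]) − (E[E[Y|T∈𝒯_a,X]|X∈𝒳_{g'}] − E[E[Y|T∈𝒯_{a'},X]|X∈𝒳_{g'}]) = Δ_1(a,a',g,g') + Δ_2(a,a',g,g') + Δ_3(a,a',g,g') + Δ_{4'}(a,a',g,g') + Δ_5(a,a',g,g'). -/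
open MeasureTheory

lemma integrable_of_setIntegral_le {𝒳 : Type*} [MeasurableSpace 𝒳]
    (ν : Measure 𝒳) [IsFiniteMeasure ν] {f : 𝒳 → ℝ}
    (hf : Measurable f) (hnn : ∀ x, 0 ≤ f x) (C : ℝ)
    (h : ∀ B, MeasurableSet B → IntegrableOn f B ν → ∫ x in B, f x ∂ν ≤ C) :
    Integrable f ν := by
  refine ⟨hf.aestronglyMeasurable, ?_⟩
  rw [hasFiniteIntegral_iff_ofReal (ae_of_all _ hnn)]
  set B : ℕ → Set 𝒳 := fun n => {x | f x ≤ n} with hBdef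
  have hBm : ∀ n, MeasurableSet (B n) := fun n => measurableSet_le hf measurable_const
  have hint : ∀ n, IntegrableOn f (B n) ν := by
    intro n
    exact Measure.integrableOn_of_bounded (measure_ne_top ν _) hf.aestronglyMeasurable
      (by
        filter_upwards [ae_restrict_mem (hBm n)] with x hx
        rw [Real.norm_eq_abs, abs_of_nonneg (hnn x)]
        exact hx)
  have key : ∀ n, ∫⁻ x in B n, ENNReal.ofReal (f x) ∂ν ≤ ENNReal.ofReal C := by
    intro n
    rw [← ofReal_integral_eq_lintegral_ofReal (hint n) (ae_of_all _ hnn)]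
    exact ENNReal.ofReal_le_ofReal (h (B n) (hBm n) (hint n))
  set F : ℕ → 𝒳 → ENNReal := fun n x => (B n).indicator (fun x => ENNReal.ofReal (f x)) x with hFdef
  have hFm : ∀ n, Measurable (F n) := fun n =>
    (hf.ennreal_ofReal).indicator (hBm n)
  have hFmono : Monotone F := by
    intro n m hnm x
    by_cases hx : x ∈ B n
    · have hx' : x ∈ B m := show f x ≤ (m:ℝ) from le_trans hx (Nat.cast_le.mpr hnm)
      simp only [F, Set.indicator_of_mem hx, Set.indicator_of_mem hx']
      exact le_refl _
    · simp only [F, Set.indicator_of_notMem hx]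
      exact zero_le
  have hFsup : ∀ x, (⨆ n, F n x) = ENNReal.ofReal (f x) := by
    intro x
    refine le_antisymm (iSup_le fun n => Set.indicator_le_self _ _ x) ?_
    obtain ⟨n, hn⟩ := exists_nat_ge (f x)
    refine le_iSup_of_le n ?_
    rw [hFdef]
    simp only [F, Set.indicator_of_mem (show x ∈ B n from hn)]
    exact le_refl _
  calc ∫⁻ x, ENNReal.ofReal (f x) ∂ν = ∫⁻ x, ⨆ n, F n x ∂ν := by
        simp_rw [hFsup]
    _ = ⨆ n, ∫⁻ x, F n x ∂ν := lintegral_iSup hFm hFmono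
    _ ≤ ENNReal.ofReal C := by
        refine iSup_le fun n => ?_
        rw [hFdef]
        simp only [F]
        rw [lintegral_indicator (hBm n)]
        exact key n
    _ < ⊤ := ENNReal.ofReal_lt_top

lemma integrable_of_setIntegral_abs_le {𝒳 : Type*} [MeasurableSpace 𝒳]
    (ν : Measure 𝒳) [IsFiniteMeasure ν] {f : 𝒳 → ℝ}
    (hf : Measurable f) (C : ℝ)
    (h : ∀ B, MeasurableSet B → IntegrableOn f B ν → |∫ x in B, f x ∂ν| ≤ C) :
    Integrable f ν := by
  have hposmeas : MeasurableSet {x | 0 ≤ f x} := measurableSet_le measurable_const hf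
  have hnegmeas : MeasurableSet {x | 0 ≤ -f x} := measurableSet_le measurable_const hf.neg
  have hkey : ∀ (g : 𝒳 → ℝ), Measurable g → (∀ x, g x = f x ∨ g x = -f x) →
      (∀ B, MeasurableSet B → IntegrableOn (fun x => max (g x) 0) B ν →
        ∫ x in B, max (g x) 0 ∂ν ≤ C) → True := fun _ _ _ _ => trivial
  -- positive part
  have hpos : Integrable (fun x => max (f x) 0) ν := by
    refine integrable_of_setIntegral_le ν (hf.max measurable_const) (fun x => le_max_right _ _) C ?_
    intro B hB hI
    have hB' : MeasurableSet (B ∩ {x | 0 ≤ f x}) := hB.inter hposmeas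
    have heq : ∀ x, B.indicator (fun x => max (f x) 0) x
        = (B ∩ {x | 0 ≤ f x}).indicator f x := by
      intro x
      by_cases hxB : x ∈ B
      · by_cases hxf : 0 ≤ f x
        · rw [Set.indicator_of_mem hxB, Set.indicator_of_mem (Set.mem_inter hxB hxf), max_eq_left hxf]
        · rw [Set.indicator_of_mem hxB, Set.indicator_of_notMem (fun hc => hxf hc.2),
            max_eq_right (le_of_not_ge hxf)]
      · rw [Set.indicator_of_notMem hxB, Set.indicator_of_notMem (fun hc => hxB hc.1)]
    have hI' : IntegrableOn f (B ∩ {x | 0 ≤ f x}) ν := by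
      refine (hI.mono_set Set.inter_subset_left).congr ?_
      filter_upwards [ae_restrict_mem hB'] with x hx
      exact max_eq_left hx.2
    calc ∫ x in B, max (f x) 0 ∂ν = ∫ x, B.indicator (fun x => max (f x) 0) x ∂ν := by
          rw [integral_indicator hB]
      _ = ∫ x, (B ∩ {x | 0 ≤ f x}).indicator f x ∂ν := by simp_rw [heq]
      _ = ∫ x in B ∩ {x | 0 ≤ f x}, f x ∂ν := integral_indicator hB'
      _ ≤ C := le_trans (le_abs_self _) (h _ hB' hI')
  have hneg : Integrable (fun x => max (-f x) 0) ν := by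
    refine integrable_of_setIntegral_le ν (hf.neg.max measurable_const) (fun x => le_max_right _ _) C ?_
    intro B hB hI
    have hB' : MeasurableSet (B ∩ {x | 0 ≤ -f x}) := hB.inter hnegmeas
    have heq : ∀ x, B.indicator (fun x => max (-f x) 0) x
        = (B ∩ {x | 0 ≤ -f x}).indicator (fun x => -f x) x := by
      intro x
      by_cases hxB : x ∈ B
      · by_cases hxf : 0 ≤ -f x
        · rw [Set.indicator_of_mem hxB, Set.indicator_of_mem (Set.mem_inter hxB hxf), max_eq_left hxf]
        · rw [Set.indicator_of_mem hxB, Set.indicator_of_notMem (fun hc => hxf hc.2),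
            max_eq_right (le_of_not_ge hxf)]
      · rw [Set.indicator_of_notMem hxB, Set.indicator_of_notMem (fun hc => hxB hc.1)]
    have hI' : IntegrableOn f (B ∩ {x | 0 ≤ -f x}) ν := by
      refine ((hI.mono_set Set.inter_subset_left).neg.congr ?_)
      filter_upwards [ae_restrict_mem hB'] with x hx
      show -(max (-f x) 0) = f x
      rw [max_eq_left hx.2]; ring
    calc ∫ x in B, max (-f x) 0 ∂ν = ∫ x, B.indicator (fun x => max (-f x) 0) x ∂ν := by
          rw [integral_indicator hB]
      _ = ∫ x, (B ∩ {x | 0 ≤ -f x}).indicator (fun x => -f x) x ∂ν := by simp_rw [heq]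
      _ = ∫ x in B ∩ {x | 0 ≤ -f x}, -f x ∂ν := integral_indicator hB'
      _ = -(∫ x in B ∩ {x | 0 ≤ -f x}, f x ∂ν) := integral_neg _
      _ ≤ C := le_trans (neg_le_abs _) (h _ hB' hI')
  have : Integrable (fun x => max (f x) 0 - max (-f x) 0) ν := hpos.sub hneg
  refine this.congr (ae_of_all _ fun x => ?_)
  show max (f x) 0 - max (-f x) 0 = f x
  rcases le_total 0 (f x) with hx | hx
  · rw [max_eq_left hx, max_eq_right (by linarith : -f x ≤ 0)]; ring
  · rw [max_eq_right hx, max_eq_left (by linarith : (0:ℝ) ≤ -f x)]; ring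

theorem keyLemma
    {Ω 𝕋 𝒳 : Type*} [MeasurableSpace Ω] [Fintype 𝕋] [MeasurableSpace 𝕋]
    [MeasurableSingletonClass 𝕋] [MeasurableSpace 𝒳]
    (P : Measure Ω) [IsProbabilityMeasure P]
    (Y : 𝕋 → Ω → ℝ) (T : Ω → 𝕋) (X : Ω → 𝒳)
    (hT : Measurable T) (hX : Measurable X)
    (hYint : ∀ t, Integrable (Y t) P)
    (m : 𝕋 → 𝒳 → ℝ) (hmmeas : ∀ t, Measurable (m t))
    (hmint : ∀ t, Integrable (fun ω => m t (X ω)) P)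
    (e : 𝕋 → 𝒳 → ℝ) (hemeas : ∀ t, Measurable (e t))
    (hepos : ∀ t x, 0 < e t x)
    (hUC : ∀ t s, ∀ B : Set 𝒳, MeasurableSet B →
      ∫ ω in X ⁻¹' B ∩ T ⁻¹' {s}, Y t ω ∂P
        = ∫ ω in X ⁻¹' B, m t (X ω) * e s (X ω) ∂P)
    (Ta : Finset 𝕋) (hTa : Ta.Nonempty)
    (w : 𝒳 → ℝ) (hwmeas : Measurable w)
    (hw : ∀ B : Set 𝒳, MeasurableSet B →
      ∫ ω in X ⁻¹' B ∩ T ⁻¹' (Ta : Set 𝕋), Y (T ω) ω ∂P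
        = ∫ ω in X ⁻¹' B, w (X ω) * ∑ s ∈ Ta, e s (X ω) ∂P)
    (B : Set 𝒳) (hB : MeasurableSet B) :
    cexp P (X ⁻¹' B) (fun ω => w (X ω))
      = ∑ t ∈ Ta, cexp P (X ⁻¹' B) (fun ω => eCondAgg e Ta t (X ω) * m t (X ω)) := by
  have hν : IsProbabilityMeasure (P.map X) := Measure.isProbabilityMeasure_map hX.aemeasurable
  have hSmeas : Measurable (fun x => ∑ s ∈ Ta, e s x) :=
    Finset.measurable_sum _ fun s _ => hemeas s
  have hSpos : ∀ x, 0 < ∑ s ∈ Ta, e s x := fun x =>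
    Finset.sum_pos (fun s _ => hepos s x) hTa
  have hmap : ∀ (g : 𝒳 → ℝ), Measurable g → ∀ (B : Set 𝒳), MeasurableSet B →
      ∫ x in B, g x ∂(P.map X) = ∫ ω in X ⁻¹' B, g (X ω) ∂P := fun g hg B hB =>
    setIntegral_map hB hg.aestronglyMeasurable hX.aemeasurable
  have hme : ∀ s ∈ Ta, Integrable (fun x => m s x * e s x) (P.map X) := by
    intro s _
    refine integrable_of_setIntegral_abs_le _ ((hmmeas s).mul (hemeas s)) (∫ ω, ‖Y s ω‖ ∂P) ?_
    intro B hB _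
    rw [hmap (fun x => m s x * e s x) ((hmmeas s).mul (hemeas s)) B hB, ← hUC s s B hB]
    calc |∫ ω in X ⁻¹' B ∩ T ⁻¹' {s}, Y s ω ∂P|
        ≤ ∫ ω in X ⁻¹' B ∩ T ⁻¹' {s}, ‖Y s ω‖ ∂P := by
          rw [← Real.norm_eq_abs]; exact norm_integral_le_integral_norm _
      _ ≤ ∫ ω, ‖Y s ω‖ ∂P :=
          setIntegral_le_integral (hYint s).norm (ae_of_all _ fun ω => norm_nonneg _)
  have hsplit : ∀ (B : Set 𝒳), MeasurableSet B →
      ∫ ω in X ⁻¹' B ∩ T ⁻¹' (Ta : Set 𝕋), Y (T ω) ω ∂P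
        = ∑ s ∈ Ta, ∫ ω in X ⁻¹' B ∩ T ⁻¹' ({s} : Set 𝕋), Y s ω ∂P := by
    intro B hB
    have hmeasTa : MeasurableSet (X ⁻¹' B ∩ T ⁻¹' (Ta : Set 𝕋)) :=
      (hX hB).inter (hT (Ta.finite_toSet.measurableSet))
    have hmeasS : ∀ s : 𝕋, MeasurableSet (X ⁻¹' B ∩ T ⁻¹' ({s} : Set 𝕋)) := fun s =>
      (hX hB).inter (hT (measurableSet_singleton s))
    have hind : ∀ ω, (X ⁻¹' B ∩ T ⁻¹' (Ta : Set 𝕋)).indicator (fun ω => Y (T ω) ω) ω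
        = ∑ s ∈ Ta, (X ⁻¹' B ∩ T ⁻¹' ({s} : Set 𝕋)).indicator (Y s) ω := by
      intro ω
      by_cases hωB : ω ∈ X ⁻¹' B
      · by_cases hωT : T ω ∈ Ta
        · rw [Set.indicator_of_mem (Set.mem_inter hωB hωT), Finset.sum_eq_single (T ω)]
          · exact (Set.indicator_of_mem
              (show ω ∈ X ⁻¹' B ∩ T ⁻¹' ({T ω} : Set 𝕋) from ⟨hωB, rfl⟩) _).symm
          · intro s _ hne
            exact Set.indicator_of_notMem
              (fun hc : ω ∈ X ⁻¹' B ∩ T ⁻¹' ({s} : Set 𝕋) =>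
                hne (Set.mem_singleton_iff.mp hc.2).symm) _
          · intro hc; exact absurd hωT hc
        · rw [Set.indicator_of_notMem
            (fun hc : ω ∈ X ⁻¹' B ∩ T ⁻¹' (Ta : Set 𝕋) => hωT hc.2)]
          refine (Finset.sum_eq_zero fun s hs => ?_).symm
          exact Set.indicator_of_notMem
            (fun hc : ω ∈ X ⁻¹' B ∩ T ⁻¹' ({s} : Set 𝕋) =>
              hωT ((Set.mem_singleton_iff.mp hc.2) ▸ hs)) _
      · rw [Set.indicator_of_notMem
          (fun hc : ω ∈ X ⁻¹' B ∩ T ⁻¹' (Ta : Set 𝕋) => hωB hc.1)]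
        refine (Finset.sum_eq_zero fun s hs => ?_).symm
        exact Set.indicator_of_notMem
          (fun hc : ω ∈ X ⁻¹' B ∩ T ⁻¹' ({s} : Set 𝕋) => hωB hc.1) _
    calc ∫ ω in X ⁻¹' B ∩ T ⁻¹' (Ta : Set 𝕋), Y (T ω) ω ∂P
        = ∫ ω, (X ⁻¹' B ∩ T ⁻¹' (Ta : Set 𝕋)).indicator (fun ω => Y (T ω) ω) ω ∂P :=
          (integral_indicator hmeasTa).symm
      _ = ∫ ω, ∑ s ∈ Ta, (X ⁻¹' B ∩ T ⁻¹' ({s} : Set 𝕋)).indicator (Y s) ω ∂P := by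
          simp_rw [hind]
      _ = ∑ s ∈ Ta, ∫ ω, (X ⁻¹' B ∩ T ⁻¹' ({s} : Set 𝕋)).indicator (Y s) ω ∂P :=
          integral_finset_sum _ fun s _ => (hYint s).indicator (hmeasS s)
      _ = ∑ s ∈ Ta, ∫ ω in X ⁻¹' B ∩ T ⁻¹' ({s} : Set 𝕋), Y s ω ∂P :=
          Finset.sum_congr rfl fun s _ => integral_indicator (hmeasS s)
  have hwS : Integrable (fun x => w x * ∑ s ∈ Ta, e s x) (P.map X) := by
    refine integrable_of_setIntegral_abs_le _ (hwmeas.mul hSmeas)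
      (∑ s ∈ Ta, ∫ ω, ‖Y s ω‖ ∂P) ?_
    intro B hB _
    have h1 : ∫ x in B, w x * ∑ s ∈ Ta, e s x ∂(P.map X)
        = ∑ s ∈ Ta, ∫ ω in X ⁻¹' B ∩ T ⁻¹' ({s} : Set 𝕋), Y s ω ∂P := by
      rw [hmap (fun x => w x * ∑ s ∈ Ta, e s x) (hwmeas.mul hSmeas) B hB, ← hw B hB, hsplit B hB]
    rw [h1]
    calc |∑ s ∈ Ta, ∫ ω in X ⁻¹' B ∩ T ⁻¹' ({s} : Set 𝕋), Y s ω ∂P|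
        ≤ ∑ s ∈ Ta, |∫ ω in X ⁻¹' B ∩ T ⁻¹' ({s} : Set 𝕋), Y s ω ∂P| :=
          Finset.abs_sum_le_sum_abs _ _
      _ ≤ ∑ s ∈ Ta, ∫ ω, ‖Y s ω‖ ∂P := by
          refine Finset.sum_le_sum fun s _ => ?_
          calc |∫ ω in X ⁻¹' B ∩ T ⁻¹' ({s} : Set 𝕋), Y s ω ∂P|
              ≤ ∫ ω in X ⁻¹' B ∩ T ⁻¹' ({s} : Set 𝕋), ‖Y s ω‖ ∂P := by
                rw [← Real.norm_eq_abs]; exact norm_integral_le_integral_norm _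
            _ ≤ ∫ ω, ‖Y s ω‖ ∂P :=
                setIntegral_le_integral (hYint s).norm (ae_of_all _ fun ω => norm_nonneg _)
  have hsumint : Integrable (fun x => ∑ s ∈ Ta, m s x * e s x) (P.map X) :=
    integrable_finset_sum _ fun s hs => hme s hs
  have heq : ∀ (B : Set 𝒳), MeasurableSet B → (P.map X) B < ⊤ →
      ∫ x in B, w x * ∑ s ∈ Ta, e s x ∂(P.map X)
        = ∫ x in B, (∑ s ∈ Ta, m s x * e s x) ∂(P.map X) := by
    intro B hB _
    rw [hmap (fun x => w x * ∑ s ∈ Ta, e s x) (hwmeas.mul hSmeas) B hB, ← hw B hB, hsplit B hB]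
    rw [integral_finset_sum _ fun s hs => (hme s hs).integrableOn]
    refine Finset.sum_congr rfl fun s hs => ?_
    rw [hmap (fun x => m s x * e s x) ((hmmeas s).mul (hemeas s)) B hB, ← hUC s s B hB]
  have hae : (fun x => w x * ∑ s ∈ Ta, e s x) =ᵐ[P.map X]
      (fun x => ∑ s ∈ Ta, m s x * e s x) :=
    ae_eq_of_forall_setIntegral_eq_of_sigmaFinite
      (fun s hs _ => hwS.integrableOn) (fun s hs _ => hsumint.integrableOn) heq
  have hae2 : w =ᵐ[P.map X] fun x => ∑ t ∈ Ta, eCondAgg e Ta t x * m t x := by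
    filter_upwards [hae] with x hx
    have hS0 : (∑ s ∈ Ta, e s x) ≠ 0 := ne_of_gt (hSpos x)
    have hwx : w x = (∑ s ∈ Ta, m s x * e s x) / (∑ s ∈ Ta, e s x) := by
      rw [eq_div_iff hS0]; exact hx
    rw [hwx, Finset.sum_div]
    refine Finset.sum_congr rfl fun t _ => ?_
    simp only [eCondAgg]
    ring
  have hecmmeas : ∀ t, Measurable (fun x => eCondAgg e Ta t x * m t x) := fun t =>
    ((hemeas t).div hSmeas).mul (hmmeas t)
  have hecm : ∀ t ∈ Ta, Integrable (fun x => eCondAgg e Ta t x * m t x) (P.map X) := by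
    intro t ht
    have hmint' : Integrable (m t) (P.map X) :=
      (integrable_map_measure (hmmeas t).aestronglyMeasurable hX.aemeasurable).mpr (hmint t)
    refine hmint'.mono (hecmmeas t).aestronglyMeasurable (ae_of_all _ fun x => ?_)
    have h2 : e t x ≤ ∑ s ∈ Ta, e s x :=
      Finset.single_le_sum (fun s _ => (hepos s x).le) ht
    have hle1 : |eCondAgg e Ta t x| ≤ 1 := by
      simp only [eCondAgg]
      rw [abs_div, abs_of_pos (hepos t x), abs_of_pos (hSpos x)]
      exact (div_le_one (hSpos x)).mpr h2
    calc ‖eCondAgg e Ta t x * m t x‖ = |eCondAgg e Ta t x| * ‖m t x‖ := by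
          rw [Real.norm_eq_abs, Real.norm_eq_abs, abs_mul]
      _ ≤ 1 * ‖m t x‖ := by
          exact mul_le_mul_of_nonneg_right hle1 (norm_nonneg _)
      _ = ‖m t x‖ := one_mul _
  have hnum : ∫ ω in X ⁻¹' B, w (X ω) ∂P
      = ∑ t ∈ Ta, ∫ ω in X ⁻¹' B, eCondAgg e Ta t (X ω) * m t (X ω) ∂P := by
    rw [← hmap w hwmeas B hB]
    rw [integral_congr_ae (ae_restrict_of_ae hae2)]
    rw [integral_finset_sum _ fun t ht => (hecm t ht).integrableOn]
    exact Finset.sum_congr rfl fun t _ => hmap _ (hecmmeas t) B hB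
  simp only [cexp]
  rw [hnum, Finset.sum_div]

lemma sum_d_eq {Ω 𝕋 𝒳 : Type*} [MeasurableSpace Ω]
    (P : Measure Ω) (T : Ω → 𝕋) (X : Ω → 𝒳) (e m : 𝕋 → 𝒳 → ℝ)
    (Ta : Finset 𝕋) (Xg : Set 𝒳) :
    Decomp.d1 P T X e m Ta Xg + Decomp.d2 P T X e m Ta Xg + Decomp.d3 P T X e m Ta Xg
      + Decomp.d4' P T X e m Ta Xg + Decomp.d5 P T X e m Ta Xg
      = (∑ t ∈ Ta, cexp P (X ⁻¹' Xg) (fun ω => eCondAgg e Ta t (X ω) * m t (X ω)))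
        - ∑ t ∈ Ta, Decomp.etaU P T X e Ta t * Decomp.muAll P X m t := by
  simp only [Decomp.d1, Decomp.d2, Decomp.d3, Decomp.d4', Decomp.d5, ccov,
    Decomp.etaBarG, Decomp.muG, ← Finset.sum_add_distrib, ← Finset.sum_sub_distrib]
  refine Finset.sum_congr rfl fun t _ => ?_
  ring

/-- **Decomposition of the adjusted group differences-in-means.** Under
unconfoundedness,
`(E[E[Y|T∈𝒯_a,X]|X∈𝒳_g] − E[E[Y|T∈𝒯_{a'},X]|X∈𝒳_g])
  − (E[E[Y|T∈𝒯_a,X]|X∈𝒳_{g'}] − E[E[Y|T∈𝒯_{a'},X]|X∈𝒳_{g'}])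
  = Δ₁ + Δ₂ + Δ₃ + Δ₄' + Δ₅`.
Here `wA` (resp. `wA'`) is a version of the adjusted regression
`E[Y|T∈𝒯_a, X = ·]` (resp. for `𝒯_{a'}`), `m t` a version of `E[Y(t)|X = ·]`,
`e t` a positive version of `P(T = t|X = ·)`, and unconfoundedness is stated in
conditional-mean form (`hUC`). -/
theorem statement13
    {Ω 𝕋 𝒳 : Type*} [MeasurableSpace Ω] [Fintype 𝕋] [MeasurableSpace 𝕋]
    [MeasurableSingletonClass 𝕋] [MeasurableSpace 𝒳]
    (P : Measure Ω) [IsProbabilityMeasure P]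
    (Y : 𝕋 → Ω → ℝ) (T : Ω → 𝕋) (X : Ω → 𝒳)
    (hT : Measurable T) (hX : Measurable X)
    (hYmeas : ∀ t, Measurable (Y t))
    (hYint : ∀ t, Integrable (Y t) P)
    (hYsq : ∀ t, Integrable (fun ω => Y t ω ^ 2) P)
    (m : 𝕋 → 𝒳 → ℝ) (hmmeas : ∀ t, Measurable (m t))
    (hmint : ∀ t, Integrable (fun ω => m t (X ω)) P)
    (hm : ∀ t, ∀ B : Set 𝒳, MeasurableSet B →
      ∫ ω in X ⁻¹' B, Y t ω ∂P = ∫ ω in X ⁻¹' B, m t (X ω) ∂P)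
    (e : 𝕋 → 𝒳 → ℝ) (hemeas : ∀ t, Measurable (e t))
    (he : ∀ t, ∀ B : Set 𝒳, MeasurableSet B →
      (P (X ⁻¹' B ∩ T ⁻¹' {t})).toReal = ∫ ω in X ⁻¹' B, e t (X ω) ∂P)
    (hepos : ∀ t x, 0 < e t x)
    (hUC : ∀ t s, ∀ B : Set 𝒳, MeasurableSet B →
      ∫ ω in X ⁻¹' B ∩ T ⁻¹' {s}, Y t ω ∂P
        = ∫ ω in X ⁻¹' B, m t (X ω) * e s (X ω) ∂P)
    -- disjoint treatment aggregations and disjoint heterogeneity groups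
    (Ta Ta' : Finset 𝕋) (hTdisj : Disjoint Ta Ta')
    (Xg Xg' : Set 𝒳) (hXg : MeasurableSet Xg) (hXg' : MeasurableSet Xg')
    (hXdisj : Disjoint Xg Xg')
    -- adjusted regressions `E[Y|T∈𝒯_a, X = ·]` and `E[Y|T∈𝒯_{a'}, X = ·]`
    (wA wA' : 𝒳 → ℝ) (hwAmeas : Measurable wA) (hwA'meas : Measurable wA')
    (hwAint : Integrable (fun ω => wA (X ω)) P)
    (hwA'int : Integrable (fun ω => wA' (X ω)) P)
    (hwA : ∀ B : Set 𝒳, MeasurableSet B →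
      ∫ ω in X ⁻¹' B ∩ T ⁻¹' (Ta : Set 𝕋), Y (T ω) ω ∂P
        = ∫ ω in X ⁻¹' B, wA (X ω) * ∑ s ∈ Ta, e s (X ω) ∂P)
    (hwA' : ∀ B : Set 𝒳, MeasurableSet B →
      ∫ ω in X ⁻¹' B ∩ T ⁻¹' (Ta' : Set 𝕋), Y (T ω) ω ∂P
        = ∫ ω in X ⁻¹' B, wA' (X ω) * ∑ s ∈ Ta', e s (X ω) ∂P)
    (hPTa : 0 < (P (T ⁻¹' (Ta : Set 𝕋))).toReal)
    (hPTa' : 0 < (P (T ⁻¹' (Ta' : Set 𝕋))).toReal)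
    (hPXg : 0 < (P (X ⁻¹' Xg)).toReal)
    (hPXg' : 0 < (P (X ⁻¹' Xg')).toReal)
    (hP1 : 0 < (P (T ⁻¹' (Ta : Set 𝕋) ∩ X ⁻¹' Xg)).toReal)
    (hP2 : 0 < (P (T ⁻¹' (Ta' : Set 𝕋) ∩ X ⁻¹' Xg)).toReal)
    (hP3 : 0 < (P (T ⁻¹' (Ta : Set 𝕋) ∩ X ⁻¹' Xg')).toReal)
    (hP4 : 0 < (P (T ⁻¹' (Ta' : Set 𝕋) ∩ X ⁻¹' Xg')).toReal) :
    (cexp P (X ⁻¹' Xg) (fun ω => wA (X ω))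
        - cexp P (X ⁻¹' Xg) (fun ω => wA' (X ω)))
      - (cexp P (X ⁻¹' Xg') (fun ω => wA (X ω))
        - cexp P (X ⁻¹' Xg') (fun ω => wA' (X ω)))
      = Decomp.DD (Decomp.d1 P T X e m) Ta Ta' Xg Xg'
        + Decomp.DD (Decomp.d2 P T X e m) Ta Ta' Xg Xg'
        + Decomp.DD (Decomp.d3 P T X e m) Ta Ta' Xg Xg'
        + Decomp.DD (Decomp.d4' P T X e m) Ta Ta' Xg Xg'
        + Decomp.DD (Decomp.d5 P T X e m) Ta Ta' Xg Xg' := by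
  
  have hTane : Ta.Nonempty := by
    rcases Ta.eq_empty_or_nonempty with h | h
    · exfalso; rw [h] at hPTa; simp at hPTa
    · exact h
  have hTa'ne : Ta'.Nonempty := by
    rcases Ta'.eq_empty_or_nonempty with h | h
    · exfalso; rw [h] at hPTa'; simp at hPTa'
    · exact h
  have k1 := keyLemma P Y T X hT hX hYint m hmmeas hmint e hemeas hepos hUC
    Ta hTane wA hwAmeas hwA Xg hXg
  have k2 := keyLemma P Y T X hT hX hYint m hmmeas hmint e hemeas hepos hUC
    Ta hTane wA hwAmeas hwA Xg' hXg'
  have k3 := keyLemma P Y T X hT hX hYint m hmmeas hmint e hemeas hepos hUC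
    Ta' hTa'ne wA' hwA'meas hwA' Xg hXg
  have k4 := keyLemma P Y T X hT hX hYint m hmmeas hmint e hemeas hepos hUC
    Ta' hTa'ne wA' hwA'meas hwA' Xg' hXg'
  have hd1 := sum_d_eq P T X e m Ta Xg
  have hd2 := sum_d_eq P T X e m Ta Xg'
  have hd3 := sum_d_eq P T X e m Ta' Xg
  have hd4 := sum_d_eq P T X e m Ta' Xg'
  simp only [Decomp.DD]
  rw [k1, k2, k3, k4]
  linarith [hd1, hd2, hd3, hd4]
end

section
/- Expansion of the interaction coefficient in the two-version example: β_3 = τ_1 ( E[T_1 | A=1, G=1] − E[T_1 | A=1, G=0] ) + E[τ_2(X) | A=1, G=1] E[T_2 | A=1, G=1] − E[τ_2(X) | A=1, G=0] E[T_2 | A=1, G=0] + Cov(τ_2(X), T_2 | A=1, G=1) − Cov(τ_2(X), T_2 | A=1, G=0). -/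
open MeasureTheory

/-- `T₁ = 1(T = 1)`. -/
def ind1 {Ω : Type*} (T : Ω → ℕ) : Ω → ℝ := fun ω => if T ω = 1 then 1 else 0

/-- `T₂ = 1(T = 2)`. -/
def ind2 {Ω : Type*} (T : Ω → ℕ) : Ω → ℝ := fun ω => if T ω = 2 then 1 else 0

/-- The event `{A = a} ∩ {G = g}`, where `A = 1(T > 0)`. -/
def evtAG {Ω : Type*} (T G : Ω → ℕ) (a g : ℕ) : Set Ω :=
  {ω | (if T ω = 0 then 0 else 1) = a ∧ G ω = g}

/-- The interaction coefficient of the saturated regression: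
`β₃ = (E[Y|A=1,G=1] − E[Y|A=0,G=1]) − (E[Y|A=1,G=0] − E[Y|A=0,G=0])`. -/
noncomputable def beta3 {Ω : Type*} [MeasurableSpace Ω] (P : Measure Ω)
    (T G : Ω → ℕ) (Y : Ω → ℝ) : ℝ :=
  (cexp P (evtAG T G 1 1) Y - cexp P (evtAG T G 0 1) Y)
    - (cexp P (evtAG T G 1 0) Y - cexp P (evtAG T G 0 0) Y)

/-- **Expansion of the interaction coefficient in the two-version example.**
With `Y = τ₁ T₁ + τ₂(X) T₂`,
`β₃ = τ₁ (E[T₁|A=1,G=1] − E[T₁|A=1,G=0])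
      + E[τ₂(X)|A=1,G=1] E[T₂|A=1,G=1] − E[τ₂(X)|A=1,G=0] E[T₂|A=1,G=0]
      + Cov(τ₂(X), T₂|A=1,G=1) − Cov(τ₂(X), T₂|A=1,G=0)`. -/
theorem statement14
    {Ω 𝒳 : Type*} [MeasurableSpace Ω] [MeasurableSpace 𝒳]
    (P : Measure Ω) [IsProbabilityMeasure P]
    (T G : Ω → ℕ) (X : Ω → 𝒳) (Y : Ω → ℝ)
    (hT : Measurable T) (hG : Measurable G) (hX : Measurable X)
    (hTval : ∀ ω, T ω ≤ 2) (hGval : ∀ ω, G ω ≤ 1)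
    (τ1 : ℝ) (τ2 : 𝒳 → ℝ) (hτ2 : Measurable τ2)
    (hτ2sq : Integrable (fun ω => τ2 (X ω) ^ 2) P)
    (hY : ∀ ω, Y ω = τ1 * ind1 T ω + τ2 (X ω) * ind2 T ω)
    (hpos : ∀ a g : ℕ, a ≤ 1 → g ≤ 1 → 0 < (P (evtAG T G a g)).toReal) :
    beta3 P T G Y
      = τ1 * (cexp P (evtAG T G 1 1) (ind1 T) - cexp P (evtAG T G 1 0) (ind1 T))
        + cexp P (evtAG T G 1 1) (fun ω => τ2 (X ω)) * cexp P (evtAG T G 1 1) (ind2 T)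
        - cexp P (evtAG T G 1 0) (fun ω => τ2 (X ω)) * cexp P (evtAG T G 1 0) (ind2 T)
        + ccov P (evtAG T G 1 1) (fun ω => τ2 (X ω)) (ind2 T)
        - ccov P (evtAG T G 1 0) (fun ω => τ2 (X ω)) (ind2 T) := by
  classical
  have hmeasAG : ∀ a g : ℕ, MeasurableSet (evtAG T G a g) := by
    intro a g
    have h1 : Measurable (fun ω => if T ω = 0 then (0:ℕ) else 1) :=
      Measurable.ite (hT (measurableSet_singleton 0)) measurable_const measurable_const
    have : evtAG T G a g =
        (fun ω => if T ω = 0 then (0:ℕ) else 1) ⁻¹' {a} ∩ G ⁻¹' {g} := by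
      ext ω; simp [evtAG, Set.mem_inter_iff]
    rw [this]
    exact (h1 (measurableSet_singleton a)).inter (hG (measurableSet_singleton g))
  -- A = 0 events: Y vanishes
  have hzero : ∀ g : ℕ, cexp P (evtAG T G 0 g) Y = 0 := by
    intro g
    have : (∫ ω in evtAG T G 0 g, Y ω ∂P) = 0 := by
      rw [setIntegral_congr_fun (hmeasAG 0 g) (g := fun _ => (0:ℝ)) ?_]
      · simp
      · intro ω hω
        have hT0 : T ω = 0 := by
          by_contra h
          have := hω.1
          simp [h] at this
        simp [hY ω, ind1, ind2, hT0]
    simp [cexp, this]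
  -- integrability facts
  have hτ2X : Integrable (fun ω => τ2 (X ω)) P := by
    have hm : AEStronglyMeasurable (fun ω => τ2 (X ω)) P :=
      (hτ2.comp hX).aestronglyMeasurable
    exact (memLp_two_iff_integrable_sq hm).mpr hτ2sq |>.integrable (by norm_num)
  have hind1 : Integrable (ind1 T) P := by
    refine (integrable_const (1:ℝ)).mono' ?_ ?_
    · exact (Measurable.ite (hT (measurableSet_singleton 1)) measurable_const
        measurable_const).aestronglyMeasurable
    · filter_upwards with ω
      simp only [ind1]
      split <;> simp
  have hprod : Integrable (fun ω => τ2 (X ω) * ind2 T ω) P := by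
    refine hτ2X.norm.mono' ?_ ?_
    · exact ((hτ2.comp hX).mul (Measurable.ite (hT (measurableSet_singleton 2))
        measurable_const measurable_const)).aestronglyMeasurable
    · filter_upwards with ω
      simp only [ind2, norm_mul]
      split <;> simp [abs_nonneg]
  -- A = 1 events: decompose cexp of Y
  have hone : ∀ g : ℕ, cexp P (evtAG T G 1 g) Y
      = τ1 * cexp P (evtAG T G 1 g) (ind1 T)
        + cexp P (evtAG T G 1 g) (fun ω => τ2 (X ω) * ind2 T ω) := by
    intro g
    have hint : (∫ ω in evtAG T G 1 g, Y ω ∂P)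
        = τ1 * (∫ ω in evtAG T G 1 g, ind1 T ω ∂P)
          + ∫ ω in evtAG T G 1 g, τ2 (X ω) * ind2 T ω ∂P := by
      have : (∫ ω in evtAG T G 1 g, Y ω ∂P)
          = ∫ ω in evtAG T G 1 g, (τ1 * ind1 T ω + τ2 (X ω) * ind2 T ω) ∂P := by
        exact setIntegral_congr_fun (hmeasAG 1 g) (fun ω _ => hY ω)
      rw [this, integral_add ((hind1.const_mul τ1).restrict) (hprod.restrict),
        integral_const_mul]
    simp only [cexp, hint, add_div, mul_div_assoc]
  have e11 := hone 1
  have e10 := hone 0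
  have z1 := hzero 1
  have z0 := hzero 0
  simp only [beta3, ccov, z1, z0, e11, e10]
  ring
end

section
/- Finding heterogeneity without heterogeneous effects: in the two-version example, if τ_2(X) = τ_2 is constant, then β_3 = (τ_1 − τ_2) ( E[T_1 | A=1, G=1] − E[T_1 | A=1, G=0] ); in particular β_3 can be nonzero whenever τ_1 ≠ τ_2 and the version-1 probability depends on G, even though every unit-level treatment effect is homogeneous across groups. -/
open MeasureTheory

section Aux
variable {Ω : Type*} [MeasurableSpace Ω]

lemma measurableSet_evtAG' (T G : Ω → ℕ) (hT : Measurable T) (hG : Measurable G) (a g : ℕ) :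
    MeasurableSet (evtAG T G a g) := by
  apply MeasurableSet.inter
  · have : Measurable (fun ω => if T ω = 0 then (0:ℕ) else 1) :=
      Measurable.ite (hT (measurableSet_singleton 0)) measurable_const measurable_const
    exact this (measurableSet_singleton a)
  · exact hG (measurableSet_singleton g)

lemma ind1_eq_indicator (T : Ω → ℕ) :
    ind1 T = Set.indicator (T ⁻¹' {1}) (fun _ => (1:ℝ)) := by
  funext ω
  simp [ind1, Set.indicator]

lemma integrable_ind1 (P : Measure Ω) [IsFiniteMeasure P] (T : Ω → ℕ) (hT : Measurable T)
    (S : Set Ω) : Integrable (ind1 T) (P.restrict S) := by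
  rw [ind1_eq_indicator]
  exact (integrable_const (1:ℝ)).indicator (hT (measurableSet_singleton 1))

lemma cexp_A0 (P : Measure Ω) (T G : Ω → ℕ) (hT : Measurable T) (hG : Measurable G)
    (Y : Ω → ℝ) (τ1 : ℝ) (τ2' : Ω → ℝ)
    (hY : ∀ ω, Y ω = τ1 * ind1 T ω + τ2' ω * ind2 T ω) (g : ℕ) :
    cexp P (evtAG T G 0 g) Y = 0 := by
  have h0 : ∫ ω in evtAG T G 0 g, Y ω ∂P = ∫ ω in evtAG T G 0 g, (0:ℝ) ∂P := by
    apply setIntegral_congr_fun (measurableSet_evtAG' T G hT hG 0 g)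
    intro ω hω
    have hT0 : T ω = 0 := by
      by_contra h
      simp [evtAG, h] at hω
    simp [hY ω, ind1, ind2, hT0]
  simp [cexp, h0]

lemma cexp_A1 (P : Measure Ω) [IsProbabilityMeasure P] (T G : Ω → ℕ)
    (hT : Measurable T) (hG : Measurable G) (hTval : ∀ ω, T ω ≤ 2)
    (Y : Ω → ℝ) (τ1 c : ℝ) (τ2' : Ω → ℝ) (hc : ∀ ω, τ2' ω = c)
    (hY : ∀ ω, Y ω = τ1 * ind1 T ω + τ2' ω * ind2 T ω) (g : ℕ)
    (hp : 0 < (P (evtAG T G 1 g)).toReal) :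
    cexp P (evtAG T G 1 g) Y = (τ1 - c) * cexp P (evtAG T G 1 g) (ind1 T) + c := by
  set S := evtAG T G 1 g with hS
  have hSm : MeasurableSet S := measurableSet_evtAG' T G hT hG 1 g
  have h1 : ∫ ω in S, Y ω ∂P = ∫ ω in S, ((τ1 - c) * ind1 T ω + c) ∂P := by
    apply setIntegral_congr_fun hSm
    intro ω hω
    have hTne : T ω ≠ 0 := by
      by_contra h
      simp [hS, evtAG, h] at hω
    rw [hY ω, hc ω]
    have h2' := hTval ω
    interval_cases h : T ω <;> simp_all [ind1, ind2] <;> ring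
  have hint : Integrable (ind1 T) (P.restrict S) := integrable_ind1 P T hT S
  have h2 : ∫ ω in S, ((τ1 - c) * ind1 T ω + c) ∂P
      = (τ1 - c) * (∫ ω in S, ind1 T ω ∂P) + c * (P S).toReal := by
    rw [integral_add (hint.const_mul _) (integrable_const c), integral_const_mul,
      setIntegral_const]
    simp [mul_comm, measureReal_def]
  have hpne : (P S).toReal ≠ 0 := ne_of_gt hp
  rw [cexp, h1, h2, cexp]
  field_simp

end Aux

/-- **Finding heterogeneity without heterogeneous effects.** In the two-version
example, if `τ₂(X) = τ₂` is constant, then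
`β₃ = (τ₁ − τ₂) (E[T₁|A=1,G=1] − E[T₁|A=1,G=0])`; in particular `β₃` is nonzero
whenever `τ₁ ≠ τ₂` and the version-1 probability depends on `G`, even though every
unit-level treatment effect is homogeneous across groups. -/
theorem statement15
    {Ω 𝒳 : Type*} [MeasurableSpace Ω] [MeasurableSpace 𝒳]
    (P : Measure Ω) [IsProbabilityMeasure P]
    (T G : Ω → ℕ) (X : Ω → 𝒳) (Y : Ω → ℝ)
    (hT : Measurable T) (hG : Measurable G) (hX : Measurable X)
    (hTval : ∀ ω, T ω ≤ 2) (hGval : ∀ ω, G ω ≤ 1)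
    (τ1 : ℝ) (τ2 : 𝒳 → ℝ) (hτ2 : Measurable τ2)
    (hτ2sq : Integrable (fun ω => τ2 (X ω) ^ 2) P)
    (hY : ∀ ω, Y ω = τ1 * ind1 T ω + τ2 (X ω) * ind2 T ω)
    (hpos : ∀ a g : ℕ, a ≤ 1 → g ≤ 1 → 0 < (P (evtAG T G a g)).toReal)
    -- effect homogeneity: `τ₂(·)` is a constant `c`
    (c : ℝ) (hconst : ∀ x, τ2 x = c) :
    beta3 P T G Y
        = (τ1 - c) * (cexp P (evtAG T G 1 1) (ind1 T)
            - cexp P (evtAG T G 1 0) (ind1 T)) ∧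
    ((τ1 ≠ c ∧
        cexp P (evtAG T G 1 1) (ind1 T) ≠ cexp P (evtAG T G 1 0) (ind1 T)) →
      beta3 P T G Y ≠ 0) := by
  have h01 := cexp_A0 P T G hT hG Y τ1 (fun ω => τ2 (X ω)) hY 1
  have h00 := cexp_A0 P T G hT hG Y τ1 (fun ω => τ2 (X ω)) hY 0
  have h11 := cexp_A1 P T G hT hG hTval Y τ1 c (fun ω => τ2 (X ω)) (fun ω => hconst _) hY 1
    (hpos 1 1 le_rfl le_rfl)
  have h10 := cexp_A1 P T G hT hG hTval Y τ1 c (fun ω => τ2 (X ω)) (fun ω => hconst _) hY 0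
    (hpos 1 0 le_rfl (Nat.zero_le 1))
  have hmain : beta3 P T G Y
      = (τ1 - c) * (cexp P (evtAG T G 1 1) (ind1 T) - cexp P (evtAG T G 1 0) (ind1 T)) := by
    rw [beta3, h01, h00, h11, h10]; ring
  refine ⟨hmain, fun ⟨h1, h2⟩ => ?_⟩
  rw [hmain]
  exact mul_ne_zero (sub_ne_zero.mpr h1) (sub_ne_zero.mpr h2)
end

section
/- Finding heterogeneity when group effects are homogeneous: in the two-version example, if τ_1 = 0 and E[τ_2(X) | A=1, G=g] = 0 for g ∈ {0,1}, then β_3 = Cov(τ_2(X), T_2 | A=1, G=1) − Cov(τ_2(X), T_2 | A=1, G=0); moreover, for each g ∈ {0,1}, Cov(τ_2(X), T_2 | A=1, G=g) = Cov( τ_2(X), h_g(X) | A=1, G=g ), where h_g(X) is (a version of) the conditional expectation E[T_2 | A=1, G=g, X] of T_2 given X on the event {A=1, G=g}. -/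
open MeasureTheory

lemma integrableOn_of_mem_window {Ω : Type*} [MeasurableSpace Ω] (Q : Measure Ω)
    [IsFiniteMeasure Q] {g : Ω → ℝ} (hg : Measurable g) {s : Set Ω} (hs : MeasurableSet s)
    {C : ℝ} (hC : ∀ ω ∈ s, |g ω| ≤ C) : IntegrableOn g s Q := by
  refine Integrable.mono' (integrable_const C) hg.aestronglyMeasurable ?_
  exact (ae_restrict_mem hs).mono fun ω hω => by simpa using hC ω hω

lemma key_integral_eq {Ω 𝒳 : Type*} [mΩ : MeasurableSpace Ω] [m𝒳 : MeasurableSpace 𝒳]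
    (Q : Measure Ω) [IsFiniteMeasure Q]
    (X : Ω → 𝒳) (hX : Measurable X) (f : Ω → ℝ) (hfm : Measurable f)
    (hf0 : ∀ ω, 0 ≤ f ω) (hf1 : ∀ ω, f ω ≤ 1)
    (h : 𝒳 → ℝ) (hh : Measurable h)
    (heq : ∀ B : Set 𝒳, MeasurableSet B →
      ∫ ω in X ⁻¹' B, f ω ∂Q = ∫ ω in X ⁻¹' B, h (X ω) ∂Q)
    (τ : 𝒳 → ℝ) (hτ : Measurable τ) (hτint : Integrable (fun ω => τ (X ω)) Q) :
    ∫ ω, τ (X ω) * f ω ∂Q = ∫ ω, τ (X ω) * h (X ω) ∂Q := by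
  have hm : m𝒳.comap X ≤ mΩ := hX.comap_le
  have hgm : Measurable fun ω => h (X ω) := hh.comp hX
  have hgmm : Measurable[m𝒳.comap X] fun ω => h (X ω) := hh.comp (comap_measurable X)
  set g : Ω → ℝ := fun ω => h (X ω) with hg_def
  have hf_int : Integrable f Q := by
    refine Integrable.mono' (integrable_const 1) hfm.aestronglyMeasurable ?_
    exact Filter.Eventually.of_forall fun ω => by
      rw [Real.norm_eq_abs, abs_of_nonneg (hf0 ω)]; exact hf1 ω
  have hf_between : ∀ s : Set Ω, MeasurableSet s →
      0 ≤ (∫ ω in s, f ω ∂Q) ∧ (∫ ω in s, f ω ∂Q) ≤ (Q s).toReal := by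
    intro s hs
    constructor
    · exact setIntegral_nonneg hs fun ω _ => hf0 ω
    · calc (∫ ω in s, f ω ∂Q) ≤ ∫ _ω in s, (1 : ℝ) ∂Q :=
            setIntegral_mono_on hf_int.integrableOn
              integrableOn_const hs fun ω _ => hf1 ω
        _ = (Q s).toReal := by simp; rfl
  have hpos : ∀ n : ℕ, Q (g ⁻¹' Set.Ico ((n : ℝ) + 2) ((n : ℝ) + 3)) = 0 := by
    intro n
    set s := g ⁻¹' Set.Ico ((n : ℝ) + 2) ((n : ℝ) + 3) with hs_def
    have hs : MeasurableSet s := hgm measurableSet_Ico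
    have hmem : ∀ ω ∈ s, (n : ℝ) + 2 ≤ g ω ∧ g ω < (n : ℝ) + 3 := fun ω hω => hω
    have hint : IntegrableOn g s Q := by
      refine integrableOn_of_mem_window Q hgm hs (C := (n : ℝ) + 3) fun ω hω => ?_
      have := hmem ω hω
      rw [abs_of_nonneg (by linarith [this.1])]; linarith [this.2]
    have heqs : ∫ ω in s, f ω ∂Q = ∫ ω in s, g ω ∂Q := by
      have hrw : s = X ⁻¹' (h ⁻¹' Set.Ico ((n : ℝ) + 2) ((n : ℝ) + 3)) := rfl
      rw [hrw]; exact heq _ (hh measurableSet_Ico)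
    have hlow : ((n : ℝ) + 2) * (Q s).toReal ≤ ∫ ω in s, g ω ∂Q := by
      calc ((n : ℝ) + 2) * (Q s).toReal = ∫ _ω in s, ((n : ℝ) + 2) ∂Q := by
            simp [mul_comm]; left; rfl
        _ ≤ ∫ ω in s, g ω ∂Q :=
          setIntegral_mono_on integrableOn_const hint hs
            fun ω hω => (hmem ω hω).1
    have hup := (hf_between s hs).2
    have h0 : (0:ℝ) ≤ (Q s).toReal := ENNReal.toReal_nonneg
    have hz : (Q s).toReal = 0 := by nlinarith [heqs]
    exact ((ENNReal.toReal_eq_zero_iff _).1 hz).resolve_right (measure_ne_top _ _)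
  have hneg : ∀ n : ℕ, Q (g ⁻¹' Set.Ioc (-((n : ℝ) + 2)) (-((n : ℝ) + 1))) = 0 := by
    intro n
    set s := g ⁻¹' Set.Ioc (-((n : ℝ) + 2)) (-((n : ℝ) + 1)) with hs_def
    have hs : MeasurableSet s := hgm measurableSet_Ioc
    have hmem : ∀ ω ∈ s, -((n : ℝ) + 2) < g ω ∧ g ω ≤ -((n : ℝ) + 1) := fun ω hω => hω
    have hint : IntegrableOn g s Q := by
      refine integrableOn_of_mem_window Q hgm hs (C := (n : ℝ) + 2) fun ω hω => ?_
      have := hmem ω hω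
      rw [abs_of_nonpos (by linarith [this.2])]; linarith [this.1]
    have heqs : ∫ ω in s, f ω ∂Q = ∫ ω in s, g ω ∂Q := by
      have hrw : s = X ⁻¹' (h ⁻¹' Set.Ioc (-((n : ℝ) + 2)) (-((n : ℝ) + 1))) := rfl
      rw [hrw]; exact heq _ (hh measurableSet_Ioc)
    have hupg : ∫ ω in s, g ω ∂Q ≤ (-((n : ℝ) + 1)) * (Q s).toReal := by
      calc ∫ ω in s, g ω ∂Q ≤ ∫ _ω in s, (-((n : ℝ) + 1)) ∂Q :=
            setIntegral_mono_on hint integrableOn_const hs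
              fun ω hω => (hmem ω hω).2
        _ = (-((n : ℝ) + 1)) * (Q s).toReal := by simp [mul_comm]; left; rfl
    have hlow := (hf_between s hs).1
    have h0 : (0:ℝ) ≤ (Q s).toReal := ENNReal.toReal_nonneg
    have hz : (Q s).toReal = 0 := by nlinarith [heqs]
    exact ((ENNReal.toReal_eq_zero_iff _).1 hz).resolve_right (measure_ne_top _ _)
  have hbound : ∀ᵐ ω ∂Q, |g ω| ≤ 2 := by
    have hnull : Q ({ω | ¬ |g ω| ≤ 2}) = 0 := by
      refine measure_mono_null (?_ : _ ⊆ (⋃ n : ℕ, g ⁻¹' Set.Ico ((n : ℝ) + 2) ((n : ℝ) + 3)) ∪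
        (⋃ n : ℕ, g ⁻¹' Set.Ioc (-((n : ℝ) + 2)) (-((n : ℝ) + 1))))
        (measure_union_null (measure_iUnion_null hpos) (measure_iUnion_null hneg))
      intro ω hω
      simp only [Set.mem_setOf_eq, not_le] at hω
      rcases le_or_gt 0 (g ω) with hsign | hsign
      · have h2 : 2 < g ω := by rwa [abs_of_nonneg hsign] at hω
        left
        refine Set.mem_iUnion.2 ⟨⌊g ω⌋₊ - 2, ?_⟩
        have hfl : (⌊g ω⌋₊ : ℝ) ≤ g ω := Nat.floor_le (by linarith)
        have hfl2 : g ω < (⌊g ω⌋₊ : ℝ) + 1 := Nat.lt_floor_add_one _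
        have hge : 2 ≤ ⌊g ω⌋₊ := Nat.le_floor (by exact_mod_cast h2.le)
        have hc : ((⌊g ω⌋₊ - 2 : ℕ) : ℝ) = (⌊g ω⌋₊ : ℝ) - 2 := by push_cast [hge]; ring
        exact ⟨by rw [hc]; linarith, by rw [hc]; linarith⟩
      · have h2 : g ω < -2 := by rw [abs_of_neg hsign] at hω; linarith
        right
        have ht2 : 2 < -(g ω) := by linarith
        refine Set.mem_iUnion.2 ⟨⌊-(g ω)⌋₊ - 1, ?_⟩
        have hfl : (⌊-(g ω)⌋₊ : ℝ) ≤ -(g ω) := Nat.floor_le (by linarith)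
        have hfl2 : -(g ω) < (⌊-(g ω)⌋₊ : ℝ) + 1 := Nat.lt_floor_add_one _
        have hge : 1 ≤ ⌊-(g ω)⌋₊ := Nat.le_floor (by exact_mod_cast (by linarith : (1:ℝ) ≤ -(g ω)))
        have hc : ((⌊-(g ω)⌋₊ - 1 : ℕ) : ℝ) = (⌊-(g ω)⌋₊ : ℝ) - 1 := by push_cast [hge]; ring
        exact ⟨by rw [hc]; push_cast; linarith, by rw [hc]; push_cast; linarith⟩
    exact (ae_iff).2 hnull
  have hg_int : Integrable g Q := by
    refine Integrable.mono' (integrable_const 2) hgm.aestronglyMeasurable ?_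
    exact hbound.mono fun ω hω => by simpa using hω
  haveI : SigmaFinite (Q.trim hm) := by
    haveI : IsFiniteMeasure (Q.trim hm) := isFiniteMeasure_trim hm
    infer_instance
  have hcond : g =ᵐ[Q] Q[f|m𝒳.comap X] := by
    refine ae_eq_condExp_of_forall_setIntegral_eq hm hf_int
      (fun s _ _ => hg_int.integrableOn) (fun s hs _ => ?_)
      ⟨g, hgmm.stronglyMeasurable, Filter.EventuallyEq.refl _ _⟩
    obtain ⟨B, hB, rfl⟩ := hs
    exact (heq B hB).symm
  have hφm : StronglyMeasurable[m𝒳.comap X] (fun ω => τ (X ω)) :=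
    (hτ.comp (comap_measurable X)).stronglyMeasurable
  have hφf_int : Integrable ((fun ω => τ (X ω)) * f) Q := by
    refine Integrable.mono' hτint.abs
      ((hτ.comp hX).aestronglyMeasurable.mul hfm.aestronglyMeasurable) ?_
    refine Filter.Eventually.of_forall fun ω => ?_
    simp only [Pi.mul_apply, Real.norm_eq_abs, abs_mul]
    calc |τ (X ω)| * |f ω| ≤ |τ (X ω)| * 1 := by
          refine mul_le_mul_of_nonneg_left ?_ (abs_nonneg _)
          rw [abs_of_nonneg (hf0 ω)]; exact hf1 ω
      _ = |τ (X ω)| := mul_one _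
  have hpull : Q[(fun ω => τ (X ω)) * f|m𝒳.comap X]
      =ᵐ[Q] (fun ω => τ (X ω)) * Q[f|m𝒳.comap X] :=
    condExp_mul_of_stronglyMeasurable_left hφm hφf_int hf_int
  calc ∫ ω, τ (X ω) * f ω ∂Q = ∫ ω, ((fun ω => τ (X ω)) * f) ω ∂Q := rfl
    _ = ∫ ω, (Q[(fun ω => τ (X ω)) * f|m𝒳.comap X]) ω ∂Q :=
        (integral_condExp hm).symm
    _ = ∫ ω, τ (X ω) * (Q[f|m𝒳.comap X]) ω ∂Q :=
        integral_congr_ae (hpull.mono fun ω hω => by simpa using hω)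
    _ = ∫ ω, τ (X ω) * g ω ∂Q :=
        integral_congr_ae (hcond.symm.mono fun ω hω => by dsimp only; rw [hω])



open MeasureTheory

/-- **Finding heterogeneity when group effects are homogeneous.** In the two-version
example, if `τ₁ = 0` and `E[τ₂(X)|A=1,G=g] = 0` for `g ∈ {0,1}`, then
`β₃ = Cov(τ₂(X), T₂|A=1,G=1) − Cov(τ₂(X), T₂|A=1,G=0)`; moreover, for each
`g ∈ {0,1}`, `Cov(τ₂(X), T₂|A=1,G=g) = Cov(τ₂(X), h_g(X)|A=1,G=g)`, where `h_g(X)`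
is (a version of) the conditional expectation `E[T₂|A=1,G=g,X]` of `T₂` given `X` on
the event `{A=1, G=g}`. -/
theorem statement16
    {Ω 𝒳 : Type*} [MeasurableSpace Ω] [MeasurableSpace 𝒳]
    (P : Measure Ω) [IsProbabilityMeasure P]
    (T G : Ω → ℕ) (X : Ω → 𝒳) (Y : Ω → ℝ)
    (hT : Measurable T) (hG : Measurable G) (hX : Measurable X)
    (hTval : ∀ ω, T ω ≤ 2) (hGval : ∀ ω, G ω ≤ 1)
    (τ1 : ℝ) (τ2 : 𝒳 → ℝ) (hτ2 : Measurable τ2)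
    (hτ2sq : Integrable (fun ω => τ2 (X ω) ^ 2) P)
    (hY : ∀ ω, Y ω = τ1 * ind1 T ω + τ2 (X ω) * ind2 T ω)
    (hpos : ∀ a g : ℕ, a ≤ 1 → g ≤ 1 → 0 < (P (evtAG T G a g)).toReal)
    -- homogeneous group effects
    (hτ1 : τ1 = 0)
    (hmean : ∀ g ≤ 1, cexp P (evtAG T G 1 g) (fun ω => τ2 (X ω)) = 0) :
    beta3 P T G Y
        = ccov P (evtAG T G 1 1) (fun ω => τ2 (X ω)) (ind2 T)
          - ccov P (evtAG T G 1 0) (fun ω => τ2 (X ω)) (ind2 T) ∧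
    ∀ g ≤ 1, ∀ h : 𝒳 → ℝ, Measurable h →
      (∀ B : Set 𝒳, MeasurableSet B →
        ∫ ω in evtAG T G 1 g ∩ X ⁻¹' B, ind2 T ω ∂P
          = ∫ ω in evtAG T G 1 g ∩ X ⁻¹' B, h (X ω) ∂P) →
      ccov P (evtAG T G 1 g) (fun ω => τ2 (X ω)) (ind2 T)
        = ccov P (evtAG T G 1 g) (fun ω => τ2 (X ω)) (fun ω => h (X ω)) := by
  -- measurability of the events
  have hevt : ∀ a g' : ℕ, MeasurableSet (evtAG T G a g') := by
    intro a g'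
    have h1 : Measurable fun ω => if T ω = 0 then (0 : ℕ) else 1 :=
      Measurable.ite (hT (measurableSet_singleton 0)) measurable_const measurable_const
    exact (h1 (measurableSet_singleton a)).inter (hG (measurableSet_singleton g'))
  have hind2m : Measurable (ind2 T) :=
    Measurable.ite (hT (measurableSet_singleton 2)) measurable_const measurable_const
  have hind2_0 : ∀ ω, 0 ≤ ind2 T ω := fun ω => by unfold ind2; split <;> norm_num
  have hind2_1 : ∀ ω, ind2 T ω ≤ 1 := fun ω => by unfold ind2; split <;> norm_num
  have hτ2int : Integrable (fun ω => τ2 (X ω)) P := by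
    refine Integrable.mono' (hτ2sq.add (integrable_const 1))
      (hτ2.comp hX).aestronglyMeasurable (Filter.Eventually.of_forall fun ω => ?_)
    rw [Real.norm_eq_abs]
    simp only [Pi.add_apply]
    nlinarith [sq_nonneg (|τ2 (X ω)| - 1), sq_abs (τ2 (X ω)), abs_nonneg (τ2 (X ω))]
  constructor
  · -- part 1
    have hzero : ∀ g' : ℕ, cexp P (evtAG T G 0 g') Y = 0 := by
      intro g'
      have hEq : Set.EqOn Y (fun _ => (0 : ℝ)) (evtAG T G 0 g') := by
        intro ω hω
        obtain ⟨h1, -⟩ := hω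
        have hT0 : T ω = 0 := by by_contra hc; simp [hc] at h1
        rw [hY ω, hτ1]
        simp [ind1, ind2, hT0]
      have : ∫ ω in evtAG T G 0 g', Y ω ∂P = 0 := by
        rw [setIntegral_congr_fun (hevt 0 g') hEq]; simp
      simp [cexp, this]
    have hone : ∀ g' : ℕ, ∫ ω in evtAG T G 1 g', Y ω ∂P
        = ∫ ω in evtAG T G 1 g', τ2 (X ω) * ind2 T ω ∂P := by
      intro g'
      refine integral_congr_ae (Filter.Eventually.of_forall fun ω => ?_)
      rw [hY ω, hτ1]; ring
    have hm1 := hmean 1 le_rfl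
    have hm0 := hmean 0 (by norm_num)
    simp only [beta3, ccov]
    rw [hzero 0, hzero 1, hm1, hm0]
    simp only [cexp] at *
    rw [hone 0, hone 1]
    ring
  · -- part 2
    intro g hg h hh hint
    have hS : MeasurableSet (evtAG T G 1 g) := hevt 1 g
    have heq : ∀ B : Set 𝒳, MeasurableSet B →
        ∫ ω in X ⁻¹' B, ind2 T ω ∂(P.restrict (evtAG T G 1 g))
          = ∫ ω in X ⁻¹' B, h (X ω) ∂(P.restrict (evtAG T G 1 g)) := by
      intro B hB
      rw [Measure.restrict_restrict (hX hB), Set.inter_comm]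
      exact hint B hB
    have I1 : ∫ ω in evtAG T G 1 g, τ2 (X ω) * ind2 T ω ∂P
        = ∫ ω in evtAG T G 1 g, τ2 (X ω) * h (X ω) ∂P :=
      key_integral_eq (P.restrict (evtAG T G 1 g)) X hX (ind2 T) hind2m hind2_0 hind2_1
        h hh heq τ2 hτ2 hτ2int.restrict
    have I2 : ∫ ω in evtAG T G 1 g, ind2 T ω ∂P = ∫ ω in evtAG T G 1 g, h (X ω) ∂P := by
      have := hint Set.univ MeasurableSet.univ
      simpa using this
    simp only [ccov, cexp, I1, I2]
end
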